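/- arXiv:2412.02435 — 12 statements merged into one kernel-verified Lean document; each statement's English description precedes it below -/
import Mathlib

section
/- If a distribution p satisfies α-core for an approval profile, then there exists an ordering i_1, …, i_{|S|} of any group S of voters sharing a commonly approved candidate such that α·u_{i_t}(p) ≥ (|S| − (t−1))/n for each t ∈ [|S|]. -/
open Finset

/-- If a distribution `p` satisfies `α`-core, then for every group `S` of voters sharing a
commonly approved candidate there is an ordering `i_1, …, i_{|S|}` of `S` such that
`α · u_{i_t}(p) ≥ (|S| − (t−1))/n` for each `t ∈ [|S|]` (here `t` is zero-indexed). -/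
theorem core_ordering {n : ℕ} {C : Type*} [Fintype C]
    (A : Fin n → Finset C) (hA : ∀ i, (A i).Nonempty)
    (p : C → ℝ) (hp0 : ∀ x, 0 ≤ p x) (hp1 : ∑ x, p x = 1)
    (α : ℝ) (hα : 1 ≤ α)
    (hcore : ¬ ∃ (S : Finset (Fin n)) (q : C → ℝ),
      (∀ x, 0 ≤ q x) ∧ (∑ x, q x = 1) ∧
      (∀ i ∈ S, α * (∑ x ∈ A i, p x) ≤ ((S.card : ℝ) / n) * (∑ x ∈ A i, q x)) ∧
      (∃ i ∈ S, α * (∑ x ∈ A i, p x) < ((S.card : ℝ) / n) * (∑ x ∈ A i, q x))) :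
    ∀ S : Finset (Fin n), (∃ x, ∀ i ∈ S, x ∈ A i) →
      ∃ e : Fin S.card → Fin n, Function.Injective e ∧ (∀ t, e t ∈ S) ∧
        ∀ t : Fin S.card, ((S.card : ℝ) - (t : ℕ)) / n ≤ α * ∑ x ∈ A (e t), p x := by
  classical
  have key : ∀ T : Finset (Fin n), T.Nonempty → (∃ x, ∀ i ∈ T, x ∈ A i) →
      ∃ i ∈ T, ((T.card : ℝ)) / n ≤ α * ∑ x ∈ A i, p x := by
    rintro T hT ⟨x, hx⟩
    by_contra h
    push_neg at h
    apply hcore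
    refine ⟨T, fun y => if y = x then 1 else 0, ?_, ?_, ?_, ?_⟩
    · intro y; dsimp only; split <;> norm_num
    · simp
    · intro i hi
      have hs : ∑ y ∈ A i, (if y = x then (1:ℝ) else 0) = 1 := by
        rw [Finset.sum_ite_eq' (A i) x fun _ => (1:ℝ)]
        simp [hx i hi]
      rw [hs, mul_one]
      exact le_of_lt (h i hi)
    · obtain ⟨i, hi⟩ := hT
      refine ⟨i, hi, ?_⟩
      have hs : ∑ y ∈ A i, (if y = x then (1:ℝ) else 0) = 1 := by
        rw [Finset.sum_ite_eq' (A i) x fun _ => (1:ℝ)]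
        simp [hx i hi]
      rw [hs, mul_one]
      exact h i hi
  suffices H : ∀ m (S : Finset (Fin n)), S.card = m → (∃ x, ∀ i ∈ S, x ∈ A i) →
      ∃ e : Fin S.card → Fin n, Function.Injective e ∧ (∀ t, e t ∈ S) ∧
        ∀ t : Fin S.card, ((S.card : ℝ) - (t : ℕ)) / n ≤ α * ∑ x ∈ A (e t), p x by
    exact fun S hS => H S.card S rfl hS
  intro m
  induction m with
  | zero =>
    intro S hc _
    refine ⟨fun t => Fin.elim0 (Fin.cast hc t), ?_, ?_, ?_⟩ <;>
      intro t <;> exact absurd t.isLt (by omega)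
  | succ m ih =>
    rintro S hc ⟨x, hx⟩
    have hT : S.Nonempty := Finset.card_pos.mp (by omega)
    obtain ⟨i0, hi0, hkey⟩ := key S hT ⟨x, hx⟩
    have hc' : (S.erase i0).card = m := by
      rw [Finset.card_erase_of_mem hi0, hc]
      omega
    obtain ⟨e', he'inj, he'mem, he'bound⟩ := ih (S.erase i0) hc'
      ⟨x, fun i hi => hx i (Finset.mem_of_mem_erase hi)⟩
    refine ⟨fun t => if ht : (t : ℕ) = 0 then i0
        else e' ⟨(t : ℕ) - 1, by have := t.isLt; omega⟩, ?_, ?_, ?_⟩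
    · intro a b hab
      simp only at hab
      by_cases ha : (a : ℕ) = 0 <;> by_cases hb : (b : ℕ) = 0
      · exact Fin.ext (by omega)
      · rw [dif_pos ha, dif_neg hb] at hab
        exact absurd hab.symm (Finset.ne_of_mem_erase (he'mem _))
      · rw [dif_neg ha, dif_pos hb] at hab
        exact absurd hab (Finset.ne_of_mem_erase (he'mem _))
      · rw [dif_neg ha, dif_neg hb] at hab
        have hv := congrArg Fin.val (he'inj hab)
        simp only [Fin.val_mk] at hv
        exact Fin.ext (by omega)
    · intro t
      by_cases ht : (t : ℕ) = 0
      · simp only [ht, dif_pos]; exact hi0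
      · simp only [dif_neg ht]
        exact Finset.mem_of_mem_erase (he'mem _)
    · intro t
      by_cases ht : (t : ℕ) = 0
      · simp only [ht, dif_pos, Nat.cast_zero, sub_zero]
        exact hkey
      · have h1 : 1 ≤ (t : ℕ) := Nat.one_le_iff_ne_zero.mpr ht
        simp only [dif_neg ht]
        have hb := he'bound ⟨(t : ℕ) - 1, by have := t.isLt; omega⟩
        refine le_trans (le_of_eq ?_) hb
        simp only [Fin.val_mk, hc, hc']
        push_cast [h1]
        ring
end

section
/- If a distribution p satisfies α-AFS for an approval profile, then for every candidate x there exists an ordering i_1, …, i_k of the voters approving x (where k = |N_x|) such that u_{i_t}(p) ≥ (1/α)·(k − (t−1))/n for each t ∈ [k]. -/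
open Finset

/-- If a distribution `p` satisfies `α`-AFS, then for every candidate `x` there is an
ordering `i_1, …, i_k` of the voters approving `x` (with `k = |N_x|`) such that
`u_{i_t}(p) ≥ (1/α)·(k − (t−1))/n` for each `t ∈ [k]` (here `t` is zero-indexed). -/
theorem afs_ordering {n : ℕ} {C : Type*} [Fintype C] [DecidableEq C]
    (A : Fin n → Finset C) (hA : ∀ i, (A i).Nonempty)
    (p : C → ℝ) (hp0 : ∀ x, 0 ≤ p x) (hp1 : ∑ x, p x = 1)
    (α : ℝ) (hα : 1 ≤ α)
    (hafs : ∀ S : Finset (Fin n), (∃ x, ∀ i ∈ S, x ∈ A i) →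
      (S.card : ℝ) / n ≤ (α / S.card) * ∑ i ∈ S, ∑ x ∈ A i, p x) :
    ∀ x : C, ∃ e : Fin (Finset.univ.filter fun i => x ∈ A i).card → Fin n,
      Function.Injective e ∧ (∀ t : Fin (Finset.univ.filter fun i => x ∈ A i).card, e t ∈ Finset.univ.filter fun i => x ∈ A i) ∧
      ∀ t : Fin (Finset.univ.filter fun i => x ∈ A i).card, (1 / α) * ((((Finset.univ.filter fun i => x ∈ A i).card : ℝ) - (t : ℕ)) / n)
        ≤ ∑ c ∈ A (e t), p c := by
  intro x
  set N := Finset.univ.filter fun i => x ∈ A i with hN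
  set u : Fin n → ℝ := fun i => ∑ c ∈ A i, p c with hu
  set le : Fin n → Fin n → Bool := fun i j => decide (u j ≤ u i) with hle
  set l : List (Fin n) := N.toList.mergeSort le with hl
  have hperm : l.Perm N.toList := List.mergeSort_perm _ _
  have hlen : l.length = N.card := by rw [hperm.length_eq, Finset.length_toList]
  have hnd : l.Nodup := hperm.nodup_iff.mpr N.nodup_toList
  have hmem : ∀ a, a ∈ l ↔ a ∈ N := by
    intro a; rw [hperm.mem_iff, Finset.mem_toList]
  have hsorted : l.Pairwise (fun a b => u b ≤ u a) := by
    have := List.pairwise_mergeSort (le := le)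
      (fun a b c h₁ h₂ => by simp only [hle, decide_eq_true_eq] at *; linarith)
      (fun a b => by simp only [hle, Bool.or_eq_true, decide_eq_true_eq]; exact le_total (u b) (u a))
      N.toList
    exact this.imp (fun h => by simpa [hle] using h)
  have hαpos : (0:ℝ) < α := lt_of_lt_of_le one_pos hα
  refine ⟨fun t => l[(t : ℕ)]'(by rw [hlen]; exact t.2), ?_, ?_, ?_⟩
  · intro s t hst
    have := (hnd.getElem_inj_iff).mp hst
    exact Fin.ext this
  · intro t; exact (hmem _).mp (List.getElem_mem _)
  · intro t
    have ht : (t : ℕ) < l.length := by rw [hlen]; exact t.2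
    set S : Finset (Fin n) := (l.drop (t : ℕ)).toFinset with hS
    have hndd : (l.drop (t : ℕ)).Nodup := hnd.sublist (List.drop_sublist _ _)
    have hcard : S.card = N.card - (t : ℕ) := by
      rw [hS, List.toFinset_card_of_nodup hndd, List.length_drop, hlen]
    have hSN : ∀ i ∈ S, i ∈ N := by
      intro i hi
      rw [hS, List.mem_toFinset] at hi
      exact (hmem i).mp (List.mem_of_mem_drop hi)
    have hSle : ∀ i ∈ S, u i ≤ u l[(t : ℕ)] := by
      intro i hi
      rw [hS, List.mem_toFinset] at hi
      obtain ⟨j, hj, rfl⟩ := List.getElem_of_mem hi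
      rw [List.getElem_drop]
      rcases Nat.eq_zero_or_pos j with rfl | hjpos
      · simp
      · exact (List.pairwise_iff_getElem.mp hsorted (t : ℕ) ((t:ℕ) + j) ht _ (by omega))
    have hScard_pos : 0 < S.card := by rw [hcard]; omega
    have hsum : ∑ i ∈ S, u i ≤ (S.card : ℝ) * u l[(t : ℕ)] := by
      have := Finset.sum_le_card_nsmul S u (u l[(t : ℕ)]) hSle
      simpa [nsmul_eq_mul] using this
    have hafsS := hafs S ⟨x, fun i hi => by
      have := hSN i hi; rw [hN, Finset.mem_filter] at this; exact this.2⟩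
    have hkey : (S.card : ℝ) / n ≤ α * u l[(t : ℕ)] := by
      refine hafsS.trans ?_
      have hc : (0:ℝ) < (S.card : ℝ) := by exact_mod_cast hScard_pos
      rw [div_mul_eq_mul_div, div_le_iff₀ hc]
      calc α * ∑ i ∈ S, u i ≤ α * ((S.card : ℝ) * u l[(t : ℕ)]) := by
            exact mul_le_mul_of_nonneg_left hsum hαpos.le
        _ = α * u l[(t : ℕ)] * (S.card : ℝ) := by ring
    have htle : (t : ℕ) ≤ N.card := by omega
    have hcast : ((N.card : ℝ) - (t : ℕ)) = (S.card : ℝ) := by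
      rw [hcard, Nat.cast_sub htle]
    rw [hcast, one_div, inv_mul_le_iff₀ hαpos]
    exact hkey
end

section
/- No unanimous distribution rule satisfies strong population consistency. Concretely: there is no function f mapping approval profiles (over candidate set {a₁, a₂, b₁, b₂}) to distributions such that (i) f assigns share 1 to any candidate uniquely approved by all voters, and (ii) for all voter-disjoint profiles A, A' and every candidate x, min{f(A,x), f(A',x)} ≤ f(A+A', x) ≤ max{f(A,x), f(A',x)}. -/
open Finset


private lemma zero_of_aux (g : Fin 4 → ℝ) (hpos : ∀ x, 0 ≤ g x) (hsum : ∑ x, g x = 1)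
    (x : Fin 4) (hx : g x = 1) : ∀ y, y ≠ x → g y = 0 := by
  intro y hyx
  rw [Fin.sum_univ_four] at hsum
  fin_cases x <;> fin_cases y <;> simp_all <;>
    linarith [hpos 0, hpos 1, hpos 2, hpos 3]

/-- No unanimous distribution rule satisfies strong population consistency.
Profiles over the candidate set `Fin 4` (candidates `a₁ = 0`, `a₂ = 1`, `b₁ = 2`, `b₂ = 3`)
are represented as multisets of nonempty ballots; combining voter-disjoint profiles is
multiset addition. -/
theorem no_unanimous_rule_satisfies_SPC :
    ¬ ∃ f : Multiset (Finset (Fin 4)) → Fin 4 → ℝ,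
      -- f maps every profile to a distribution
      (∀ P : Multiset (Finset (Fin 4)), P ≠ 0 → (∀ B ∈ P, B.Nonempty) →
        (∀ x, 0 ≤ f P x) ∧ ∑ x, f P x = 1) ∧
      -- unanimity: a candidate uniquely approved by all voters gets share 1
      (∀ P : Multiset (Finset (Fin 4)), P ≠ 0 → (∀ B ∈ P, B.Nonempty) →
        ∀ x : Fin 4, (∀ B ∈ P, x ∈ B) → (∀ y : Fin 4, (∀ B ∈ P, y ∈ B) → y = x) →
          f P x = 1) ∧
      -- strong population consistency
      (∀ P P' : Multiset (Finset (Fin 4)), P ≠ 0 → P' ≠ 0 →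
        (∀ B ∈ P, B.Nonempty) → (∀ B ∈ P', B.Nonempty) →
        ∀ x : Fin 4,
          min (f P x) (f P' x) ≤ f (P + P') x ∧ f (P + P') x ≤ max (f P x) (f P' x)) := by
  rintro ⟨f, hdist, huna, hspc⟩
  -- ballots
  set B11 : Finset (Fin 4) := {0, 2} with hB11
  set B12 : Finset (Fin 4) := {0, 3} with hB12
  set B21 : Finset (Fin 4) := {1, 2} with hB21
  set B22 : Finset (Fin 4) := {1, 3} with hB22
  -- profiles
  set A1 : Multiset (Finset (Fin 4)) := {B11, B12} with hA1
  set A2 : Multiset (Finset (Fin 4)) := {B21, B22} with hA2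
  set C1 : Multiset (Finset (Fin 4)) := {B11, B21} with hC1
  set C2 : Multiset (Finset (Fin 4)) := {B12, B22} with hC2
  have neA1 : A1 ≠ 0 := by decide
  have neA2 : A2 ≠ 0 := by decide
  have neC1 : C1 ≠ 0 := by decide
  have neC2 : C2 ≠ 0 := by decide
  have nemA1 : ∀ B ∈ A1, B.Nonempty := by decide
  have nemA2 : ∀ B ∈ A2, B.Nonempty := by decide
  have nemC1 : ∀ B ∈ C1, B.Nonempty := by decide
  have nemC2 : ∀ B ∈ C2, B.Nonempty := by decide
  -- unanimity values
  have hA1v : f A1 0 = 1 := huna A1 neA1 nemA1 0 (by decide) (by decide)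
  have hA2v : f A2 1 = 1 := huna A2 neA2 nemA2 1 (by decide) (by decide)
  have hC1v : f C1 2 = 1 := huna C1 neC1 nemC1 2 (by decide) (by decide)
  have hC2v : f C2 3 = 1 := huna C2 neC2 nemC2 3 (by decide) (by decide)
  -- zeros from distribution property
  have zero_of : ∀ (P : Multiset (Finset (Fin 4))) (hP : P ≠ 0)
      (hPn : ∀ B ∈ P, B.Nonempty) (x : Fin 4), f P x = 1 → ∀ y, y ≠ x → f P y = 0 := by
    intro P hP hPn x hx y hyx
    obtain ⟨hpos, hsum⟩ := hdist P hP hPn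
    exact zero_of_aux (f P) hpos hsum x hx y hyx
  -- SPC applications
  have hQA := hspc A1 A2 neA1 neA2 nemA1 nemA2
  have hQC := hspc C1 C2 neC1 neC2 nemC1 nemC2
  have hQeq : C1 + C2 = A1 + A2 := by decide
  rw [hQeq] at hQC
  set Q := A1 + A2 with hQ
  have neQ : Q ≠ 0 := by decide
  have nemQ : ∀ B ∈ Q, B.Nonempty := by decide
  obtain ⟨hQpos, hQsum⟩ := hdist Q neQ nemQ
  rw [Fin.sum_univ_four] at hQsum
  -- f Q 2, f Q 3 ≤ 0 from A-decomposition; f Q 0, f Q 1 ≤ 0 from C-decomposition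
  have e1 : f A1 2 = 0 := zero_of A1 neA1 nemA1 0 hA1v 2 (by decide)
  have e2 : f A2 2 = 0 := zero_of A2 neA2 nemA2 1 hA2v 2 (by decide)
  have e3 : f A1 3 = 0 := zero_of A1 neA1 nemA1 0 hA1v 3 (by decide)
  have e4 : f A2 3 = 0 := zero_of A2 neA2 nemA2 1 hA2v 3 (by decide)
  have e5 : f C1 0 = 0 := zero_of C1 neC1 nemC1 2 hC1v 0 (by decide)
  have e6 : f C2 0 = 0 := zero_of C2 neC2 nemC2 3 hC2v 0 (by decide)
  have e7 : f C1 1 = 0 := zero_of C1 neC1 nemC1 2 hC1v 1 (by decide)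
  have e8 : f C2 1 = 0 := zero_of C2 neC2 nemC2 3 hC2v 1 (by decide)
  have m2 := (hQA 2).2
  have m3 := (hQA 3).2
  have m0 := (hQC 0).2
  have m1 := (hQC 1).2
  rw [e1, e2] at m2
  rw [e3, e4] at m3
  rw [e5, e6] at m0
  rw [e7, e8] at m1
  simp only [max_self] at m0 m1 m2 m3
  linarith [hQpos 0, hQpos 1, hQpos 2, hQpos 3]
end

section
/- The conditional utilitarian rule does not satisfy α-AFS for any α < n/2 − 1: for every even n, there exists an approval profile with n voters on which the CUT distribution p and the group S = {1, …, n/2 − 1} (which shares a commonly approved candidate) satisfy (1/|S|)·∑_{i∈S} u_i(p) = (2/(n−2))·(|S|/n). -/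
open Finset

/-- The approval score of candidate `x`. -/
def approvalScore {V C : Type*} [Fintype V] [DecidableEq C]
    (A : V → Finset C) (x : C) : ℕ :=
  (Finset.univ.filter fun i => x ∈ A i).card

/-- The candidates in `A i` with maximal approval score. -/
def cutSet {V C : Type*} [Fintype V] [DecidableEq C]
    (A : V → Finset C) (i : V) : Finset C :=
  (A i).filter fun x => ∀ y ∈ A i, approvalScore A y ≤ approvalScore A x

/-- The conditional utilitarian rule: each voter distributes `1/n` uniformly over his
approved candidates with maximal approval score. -/
noncomputable def cutDist {V C : Type*} [Fintype V] [DecidableEq C]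
    (A : V → Finset C) (x : C) : ℝ :=
  (1 / (Fintype.card V : ℝ)) *
    ∑ i : V, if x ∈ cutSet A i then 1 / ((cutSet A i).card : ℝ) else 0

/-- The hard profile. -/
def prof (m : ℕ) : Fin (2*m) → Finset (Fin (m+1)) := fun i =>
  if h : (i : ℕ) < m - 1 then
    {⟨(i : ℕ) + 1, by omega⟩, ⟨m, by omega⟩}
  else if (i : ℕ) < 2*m - 2 then
    Finset.univ.filter (fun x => (x : ℕ) < m)
  else {⟨0, by omega⟩}

lemma mem_prof {m : ℕ} (hm : 2 ≤ m) (x : Fin (m+1)) (i : Fin (2*m)) :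
    x ∈ prof m i ↔
      ((i:ℕ) < m - 1 ∧ ((x:ℕ) = (i:ℕ) + 1 ∨ (x:ℕ) = m)) ∨
      (m - 1 ≤ (i:ℕ) ∧ (i:ℕ) < 2*m - 2 ∧ (x:ℕ) < m) ∨
      (2*m - 2 ≤ (i:ℕ) ∧ (x:ℕ) = 0) := by
  unfold prof
  split_ifs with h1 h2 <;> simp [Fin.ext_iff, -Fin.val_eq_zero_iff] <;> omega

lemma card_filter_fin (N : ℕ) (P : Fin N → Prop) (Q : ℕ → Prop)
    [DecidablePred P] [DecidablePred Q] (h : ∀ i : Fin N, P i ↔ Q (i : ℕ)) :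
    (Finset.univ.filter P).card = ((Finset.range N).filter Q).card := by
  simp only [filter_congr (fun i _ => by rw [h i] : ∀ i ∈ univ, P i ↔ Q (i:ℕ))]
  rw [← Finset.card_image_of_injective _ Fin.val_injective]
  congr 1
  ext k
  simp only [mem_image, mem_filter, mem_univ, true_and, mem_range]
  constructor
  · rintro ⟨i, hi, rfl⟩; exact ⟨i.isLt, hi⟩
  · rintro ⟨hk, hQ⟩; exact ⟨⟨k, hk⟩, hQ, rfl⟩

lemma score_prof {m : ℕ} (hm : 2 ≤ m) (x : Fin (m+1)) :
    approvalScore (prof m) x =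
      if (x:ℕ) = 0 then m + 1 else if (x:ℕ) < m then m else m - 1 := by
  unfold approvalScore
  simp only [mem_prof hm]
  rw [card_filter_fin (2*m) _ (fun k =>
      (k < m - 1 ∧ ((x:ℕ) = k + 1 ∨ (x:ℕ) = m)) ∨
      (m - 1 ≤ k ∧ k < 2*m - 2 ∧ (x:ℕ) < m) ∨
      (2*m - 2 ≤ k ∧ (x:ℕ) = 0)) (fun i => Iff.rfl)]
  by_cases h0 : (x:ℕ) = 0
  · rw [if_pos h0]
    rw [show ((Finset.range (2*m)).filter fun k =>
        (k < m - 1 ∧ ((x:ℕ) = k + 1 ∨ (x:ℕ) = m)) ∨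
        (m - 1 ≤ k ∧ k < 2*m - 2 ∧ (x:ℕ) < m) ∨
        (2*m - 2 ≤ k ∧ (x:ℕ) = 0)) = Finset.Ico (m-1) (2*m) from by
      ext k; simp [-Fin.val_eq_zero_iff]; omega]
    rw [Nat.card_Ico]; omega
  · rw [if_neg h0]
    by_cases hlt : (x:ℕ) < m
    · rw [if_pos hlt]
      rw [show ((Finset.range (2*m)).filter fun k =>
          (k < m - 1 ∧ ((x:ℕ) = k + 1 ∨ (x:ℕ) = m)) ∨
          (m - 1 ≤ k ∧ k < 2*m - 2 ∧ (x:ℕ) < m) ∨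
          (2*m - 2 ≤ k ∧ (x:ℕ) = 0)) = insert ((x:ℕ)-1) (Finset.Ico (m-1) (2*m-2)) from by
        ext k; simp [-Fin.val_eq_zero_iff]; omega]
      rw [Finset.card_insert_of_notMem (by simp; omega), Nat.card_Ico]; omega
    · rw [if_neg hlt]
      rw [show ((Finset.range (2*m)).filter fun k =>
          (k < m - 1 ∧ ((x:ℕ) = k + 1 ∨ (x:ℕ) = m)) ∨
          (m - 1 ≤ k ∧ k < 2*m - 2 ∧ (x:ℕ) < m) ∨
          (2*m - 2 ≤ k ∧ (x:ℕ) = 0)) = Finset.range (m-1) from by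
        ext k; simp [-Fin.val_eq_zero_iff]; omega]
      rw [Finset.card_range]

lemma score_le {m : ℕ} (hm : 2 ≤ m) (y : Fin (m+1)) :
    approvalScore (prof m) y ≤ m + 1 := by
  rw [score_prof hm]; split_ifs <;> omega

lemma cutSet_prof {m : ℕ} (hm : 2 ≤ m) (i : Fin (2*m)) :
    cutSet (prof m) i =
      if h : (i:ℕ) < m - 1 then {⟨(i:ℕ)+1, by omega⟩} else {⟨0, by omega⟩} := by
  unfold cutSet
  split_ifs with h
  · have hA : prof m i = {(⟨(i:ℕ)+1, by omega⟩ : Fin (m+1)), ⟨m, by omega⟩} := by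
      unfold prof; rw [dif_pos h]
    rw [hA]
    have ha : approvalScore (prof m) (⟨(i:ℕ)+1, by omega⟩ : Fin (m+1)) = m := by
      rw [score_prof hm]; simp; omega
    have hb : approvalScore (prof m) (⟨m, by omega⟩ : Fin (m+1)) = m - 1 := by
      rw [score_prof hm]; simp; omega
    rw [Finset.filter_insert, Finset.filter_singleton]
    rw [if_pos, if_neg]
    · simp
    · intro hall
      have := hall ⟨(i:ℕ)+1, by omega⟩ (by simp)
      rw [ha, hb] at this; omega
    · intro y hy
      simp only [mem_insert, mem_singleton] at hy
      rcases hy with rfl | rfl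
      · rw [ha]
      · rw [ha, hb]; omega
  · ext x
    simp only [mem_filter, mem_singleton]
    constructor
    · rintro ⟨hx, hall⟩
      have h0mem : (⟨0, by omega⟩ : Fin (m+1)) ∈ prof m i := by
        rw [mem_prof hm]; simp; omega
      have := hall _ h0mem
      rw [score_prof hm, score_prof hm] at this
      simp only [Fin.ext_iff] at *
      rw [mem_prof hm] at hx
      by_contra hne
      simp [-Fin.val_eq_zero_iff] at this
      split_ifs at this <;> omega
    · rintro rfl
      refine ⟨by rw [mem_prof hm]; simp; omega, fun y hy => ?_⟩
      calc approvalScore (prof m) y ≤ m + 1 := score_le hm y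
        _ = _ := by rw [score_prof hm]; simp

lemma card_cutSet {m : ℕ} (hm : 2 ≤ m) (i : Fin (2*m)) :
    (cutSet (prof m) i).card = 1 := by
  rw [cutSet_prof hm]; split_ifs <;> simp

lemma cutDist_mid {m : ℕ} (hm : 2 ≤ m) (i : Fin (2*m)) (h : (i:ℕ) < m - 1) :
    cutDist (prof m) ⟨(i:ℕ)+1, by omega⟩ = 1 / ((2*m : ℕ) : ℝ) := by
  unfold cutDist
  rw [Fintype.card_fin]
  have key : ∀ j : Fin (2*m),
      (if (⟨(i:ℕ)+1, by omega⟩ : Fin (m+1)) ∈ cutSet (prof m) j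
        then 1 / ((cutSet (prof m) j).card : ℝ) else 0)
      = if j = i then 1 else 0 := by
    intro j
    rw [cutSet_prof hm]
    by_cases hj : (j:ℕ) < m - 1
    · rw [dif_pos hj]
      by_cases hij : j = i
      · subst hij; simp
      · have hv : (j:ℕ) ≠ (i:ℕ) := fun hh => hij (Fin.ext hh)
        rw [if_neg (by simp [Fin.ext_iff]; omega), if_neg hij]
    · rw [dif_neg hj]
      have hij : j ≠ i := fun hh => hj (hh ▸ h)
      rw [if_neg (by simp [Fin.ext_iff]), if_neg hij]
  rw [Finset.sum_congr rfl (fun j _ => key j), Finset.sum_ite_eq' Finset.univ i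
    (fun _ => (1:ℝ))]
  simp

lemma cutDist_top {m : ℕ} (hm : 2 ≤ m) :
    cutDist (prof m) ⟨m, by omega⟩ = 0 := by
  unfold cutDist
  have key : ∀ j : Fin (2*m),
      (if (⟨m, by omega⟩ : Fin (m+1)) ∈ cutSet (prof m) j
        then 1 / ((cutSet (prof m) j).card : ℝ) else 0) = 0 := by
    intro j
    rw [cutSet_prof hm]
    by_cases hj : (j:ℕ) < m - 1
    · rw [dif_pos hj, if_neg (by simp [Fin.ext_iff]; omega)]
    · rw [dif_neg hj, if_neg (by simp [Fin.ext_iff]; omega)]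
  rw [Finset.sum_congr rfl (fun j _ => key j)]
  simp


/-- CUT does not satisfy `α`-AFS for any `α < n/2 − 1`: for every even `n` there is a
profile with `n` voters on which the CUT distribution `p` and a group `S` of `n/2 − 1`
voters sharing a commonly approved candidate satisfy
`(1/|S|)·∑_{i∈S} u_i(p) = (2/(n−2))·(|S|/n)`. -/
theorem cut_afs_lower_bound (n : ℕ) (hn : Even n) :
    ∃ A : Fin n → Finset (Fin (n / 2 + 1)),
      (∀ i, (A i).Nonempty) ∧
      ∃ S : Finset (Fin n), S.card = n / 2 - 1 ∧ (∃ x, ∀ i ∈ S, x ∈ A i) ∧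
        (1 / (S.card : ℝ)) * (∑ i ∈ S, ∑ x ∈ A i, cutDist A x)
          = (2 / ((n : ℝ) - 2)) * ((S.card : ℝ) / n) := by
  by_cases hsmall : n < 4
  · have hn02 : n = 0 ∨ n = 2 := by obtain ⟨k, hk⟩ := hn; omega
    refine ⟨fun _ => {0}, fun i => ⟨0, by simp⟩, ∅, by simp; omega, ⟨0, by simp⟩, ?_⟩
    rcases hn02 with rfl | rfl <;> simp
  · push_neg at hsmall
    obtain ⟨m, rfl⟩ : ∃ m, n = 2*m := ⟨n/2, by obtain ⟨k, hk⟩ := hn; omega⟩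
    have hm : 2 ≤ m := by omega
    rw [show 2*m/2 = m from by omega]
    refine ⟨prof m, ?_, Finset.univ.filter (fun i : Fin (2*m) => (i:ℕ) < m - 1),
      ?_, ⟨⟨m, by omega⟩, ?_⟩, ?_⟩
    · intro i
      unfold prof
      split_ifs
      · exact Finset.insert_nonempty _ _
      · exact ⟨⟨0, by omega⟩, by simp; omega⟩
      · exact Finset.singleton_nonempty _
    · rw [card_filter_fin _ _ (fun k => k < m - 1) (fun i => Iff.rfl),
        show (Finset.range (2*m)).filter (fun k => k < m - 1) = Finset.range (m-1)
          from by ext k; simp; omega, Finset.card_range]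
    · intro i hi
      simp only [mem_filter, mem_univ, true_and] at hi
      rw [mem_prof hm]
      exact Or.inl ⟨hi, Or.inr rfl⟩
    · have hScard : (Finset.univ.filter (fun i : Fin (2*m) => (i:ℕ) < m - 1)).card
          = m - 1 := by
        rw [card_filter_fin _ _ (fun k => k < m - 1) (fun i => Iff.rfl),
          show (Finset.range (2*m)).filter (fun k => k < m - 1) = Finset.range (m-1)
            from by ext k; simp; omega, Finset.card_range]
      have hsum : ∀ i ∈ Finset.univ.filter (fun i : Fin (2*m) => (i:ℕ) < m - 1),
          ∑ x ∈ prof m i, cutDist (prof m) x = 1 / ((2*m : ℕ) : ℝ) := by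
        intro i hi
        simp only [mem_filter, mem_univ, true_and] at hi
        have hA : prof m i = {(⟨(i:ℕ)+1, by omega⟩ : Fin (m+1)), ⟨m, by omega⟩} := by
          unfold prof; rw [dif_pos hi]
        rw [hA, Finset.sum_pair (by simp [Fin.ext_iff]; omega),
          cutDist_mid hm i hi, cutDist_top hm, add_zero]
      rw [Finset.sum_congr rfl hsum, Finset.sum_const, hScard, nsmul_eq_mul]
      have h1 : ((m - 1 : ℕ) : ℝ) = (m : ℝ) - 1 := by
        rw [Nat.cast_sub (by omega)]; norm_num
      have hmR : (2:ℝ) ≤ (m:ℝ) := by exact_mod_cast hm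
      rw [h1]
      push_cast
      have h2 : (m:ℝ) - 1 ≠ 0 := by linarith
      have h3 : (2:ℝ)*m ≠ 0 := by positivity
      have h4 : (2:ℝ)*m - 2 ≠ 0 := by linarith
      field_simp
end

section
/- The uncoordinated equal shares rule does not satisfy α-AFS for any α < n²/(2n−1): on the profile where voter i approves x* and n−1 private candidates x_j^i (with the private candidate sets pairwise disjoint across voters), the UES distribution p satisfies (1/n)·∑_{i∈N} u_i(p) = (2n−1)/n², while α-AFS applied to S = N demands that this average be at least 1/α. -/
open Finset

noncomputable def uesDist {V C : Type*} [Fintype V] [DecidableEq C]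
    (A : V → Finset C) (x : C) : ℝ :=
  ∑ i ∈ Finset.univ.filter (fun i => x ∈ A i),
    1 / ((Fintype.card V : ℝ) * ((A i).card : ℝ))

/-- UES does not satisfy `α`-AFS for any `α < n²/(2n−1)`: on the profile where voter `i`
approves `x*` (= `none`) and the `n−1` private candidates `some (i, j)`, the UES
distribution has average utility `(2n−1)/n²`, below the `1/α` demanded by `α`-AFS for
`S = N` whenever `α < n²/(2n−1)`. -/
theorem ues_afs_lower_bound (n : ℕ) :
    let A : Fin n → Finset (Option (Fin n × Fin (n - 1))) := fun i =>
      insert none ((Finset.univ : Finset (Fin (n - 1))).image fun j => some (i, j))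
    (∃ x, ∀ i : Fin n, x ∈ A i) ∧
    (1 / (n : ℝ)) * (∑ i : Fin n, ∑ c ∈ A i, uesDist A c)
      = (2 * (n : ℝ) - 1) / (n : ℝ) ^ 2 ∧
    ∀ α : ℝ, 0 < α → α < (n : ℝ) ^ 2 / (2 * (n : ℝ) - 1) →
      (1 / (n : ℝ)) * (∑ i : Fin n, ∑ c ∈ A i, uesDist A c) < 1 / α := by
  intro A
  rcases Nat.eq_zero_or_pos n with hn | hn
  · subst hn
    refine ⟨⟨none, fun i => i.elim0⟩, by simp, ?_⟩
    intro α hα hα'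
    simp at hα'
    linarith
  have hn0 : (n : ℝ) ≠ 0 := Nat.cast_ne_zero.mpr hn.ne'
  have hnpos : (0:ℝ) < n := Nat.cast_pos.mpr hn
  have hn1 : (1:ℝ) ≤ n := by exact_mod_cast hn
  have h2n : (0:ℝ) < 2 * n - 1 := by linarith
  have hcardA : ∀ i : Fin n, ((A i).card : ℝ) = n := by
    intro i
    have hni : none ∉ (Finset.univ : Finset (Fin (n - 1))).image fun j =>
        (some (i, j) : Option (Fin n × Fin (n - 1))) := by simp
    have : (A i).card = n - 1 + 1 := by
      rw [Finset.card_insert_of_notMem hni, Finset.card_image_of_injective _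
        (fun a b h => by simpa using h)]
      simp
    rw [this, Nat.sub_add_cancel hn]
  have hcardV : (Fintype.card (Fin n) : ℝ) = n := by simp
  have hnone : uesDist A none = (n : ℝ) / ((n:ℝ) * (n:ℝ)) := by
    unfold uesDist
    have hf : Finset.univ.filter (fun i : Fin n => none ∈ A i) = Finset.univ := by
      apply Finset.filter_true_of_mem
      intro i _
      exact Finset.mem_insert_self _ _
    rw [hf]
    rw [Finset.sum_congr rfl (fun i _ => by rw [hcardA i, hcardV])]
    rw [Finset.sum_const, Finset.card_univ, Fintype.card_fin, nsmul_eq_mul]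
    ring
  have hsome : ∀ (i : Fin n) (j : Fin (n-1)),
      uesDist A (some (i, j)) = 1 / ((n:ℝ) * (n:ℝ)) := by
    intro i j
    unfold uesDist
    have hf : Finset.univ.filter (fun k : Fin n => some (i, j) ∈ A k) = {i} := by
      ext k
      simp only [Finset.mem_filter, Finset.mem_univ, true_and, Finset.mem_singleton, A,
        Finset.mem_insert, Finset.mem_image]
      aesop
    rw [hf, Finset.sum_singleton, hcardA i, hcardV]
  have hsumi : ∀ i : Fin n, ∑ c ∈ A i, uesDist A c = (2 * (n:ℝ) - 1) / ((n:ℝ) * (n:ℝ)) := by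
    intro i
    have hni : none ∉ (Finset.univ : Finset (Fin (n - 1))).image fun j =>
        (some (i, j) : Option (Fin n × Fin (n - 1))) := by simp
    show ∑ c ∈ insert none _, uesDist A c = _
    rw [Finset.sum_insert hni, Finset.sum_image (by intro a _ b _ h; simpa using h)]
    rw [hnone, Finset.sum_congr rfl (fun j _ => hsome i j), Finset.sum_const, Finset.card_univ]
    have hcard1 : ((Fintype.card (Fin (n-1)) : ℝ)) = (n:ℝ) - 1 := by
      simp [Fintype.card_fin]
      push_cast [Nat.cast_sub hn]
      ring
    rw [nsmul_eq_mul, hcard1]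
    field_simp
    ring
  have hmain : (1 / (n : ℝ)) * (∑ i : Fin n, ∑ c ∈ A i, uesDist A c)
      = (2 * (n : ℝ) - 1) / (n : ℝ) ^ 2 := by
    rw [Finset.sum_congr rfl (fun i _ => hsumi i), Finset.sum_const, Finset.card_univ,
      Fintype.card_fin, nsmul_eq_mul, ← mul_assoc, one_div, inv_mul_cancel₀ hn0, one_mul, sq]
  refine ⟨⟨none, fun i => Finset.mem_insert_self _ _⟩, hmain, ?_⟩
  intro α hα hα'
  rw [hmain]
  rw [div_lt_div_iff₀ (by positivity) hα]
  rw [lt_div_iff₀ h2n] at hα'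
  nlinarith
end

section
/- The maximum payment rule satisfies monotonicity: if profile A' arises from A by one voter adding candidate x* to his ballot, then MAP(A', x*) ≥ MAP(A, x*). -/
open Finset

/-- `piCount A x X` is the number of voters who approve `x` and whose ballot is disjoint
from the already-processed candidates `X` (the total payment willingness for `x`). -/
def piCount {V : Type*} [Fintype V] {m : ℕ}
    (A : V → Finset (Fin m)) (x : Fin m) (X : Finset (Fin m)) : ℕ :=
  (Finset.univ.filter fun i => x ∈ A i ∧ A i ∩ X = ∅).card

/-- One step of the maximum payment rule: add to `X` the unprocessed candidate maximizing
`piCount`, ties broken lexicographically (by the order on `Fin m`). -/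
def mapStep {V : Type*} [Fintype V] {m : ℕ}
    (A : V → Finset (Fin m)) (X : Finset (Fin m)) : Finset (Fin m) :=
  if h : (Finset.univ \ X).Nonempty then
    insert
      (((Finset.univ \ X).filter fun x =>
          ∀ y ∈ Finset.univ \ X, piCount A y X ≤ piCount A x X).min'
        (by
          obtain ⟨b, hb, hmax⟩ :=
            Finset.exists_max_image (Finset.univ \ X) (fun x => piCount A x X) h
          exact ⟨b, Finset.mem_filter.2 ⟨hb, hmax⟩⟩))
      X
  else X

/-- The set of candidates processed by MAP after `t` steps. -/
def mapProc {V : Type*} [Fintype V] {m : ℕ}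
    (A : V → Finset (Fin m)) : ℕ → Finset (Fin m)
  | 0 => ∅
  | t + 1 => mapStep A (mapProc A t)

/-- The share MAP assigns to candidate `x`: the total payment willingness for `x` at the
moment `x` is processed, divided by the number of voters. -/
noncomputable def mapShare {V : Type*} [Fintype V] {m : ℕ}
    (A : V → Finset (Fin m)) (x : Fin m) : ℝ :=
  ∑ t ∈ Finset.range m,
    if x ∈ mapProc A (t + 1) \ mapProc A t
      then (piCount A x (mapProc A t) : ℝ) / (Fintype.card V) else 0

namespace MAPAux

variable {V : Type*} [Fintype V] {m : ℕ}

/-- The set of maximizers among unprocessed candidates. -/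
def maxFilt (A : V → Finset (Fin m)) (X : Finset (Fin m)) : Finset (Fin m) :=
  (Finset.univ \ X).filter fun x => ∀ y ∈ Finset.univ \ X, piCount A y X ≤ piCount A x X

lemma maxFilt_nonempty (A : V → Finset (Fin m)) {X : Finset (Fin m)}
    (h : (Finset.univ \ X).Nonempty) : (maxFilt A X).Nonempty := by
  obtain ⟨b, hb, hmax⟩ :=
    Finset.exists_max_image (Finset.univ \ X) (fun x => piCount A x X) h
  exact ⟨b, Finset.mem_filter.2 ⟨hb, hmax⟩⟩

lemma mapStep_of_nonempty (A : V → Finset (Fin m)) {X : Finset (Fin m)}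
    (h : (Finset.univ \ X).Nonempty) :
    mapStep A X = insert ((maxFilt A X).min' (maxFilt_nonempty A h)) X := by
  rw [mapStep, dif_pos h]; rfl

lemma subset_mapStep (A : V → Finset (Fin m)) (X : Finset (Fin m)) : X ⊆ mapStep A X := by
  rw [mapStep]
  split
  · exact Finset.subset_insert _ _
  · exact Finset.Subset.refl _

lemma mapProc_mono (A : V → Finset (Fin m)) {s t : ℕ} (h : s ≤ t) :
    mapProc A s ⊆ mapProc A t := by
  induction t with
  | zero => rw [Nat.le_zero.mp h]
  | succ t ih =>
    rcases Nat.lt_or_ge s (t + 1) with h' | h'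
    · exact (ih (Nat.lt_succ_iff.mp h')).trans (subset_mapStep A _)
    · rw [Nat.le_antisymm h h']

lemma min_le_card_mapProc (A : V → Finset (Fin m)) : ∀ t, min t m ≤ (mapProc A t).card := by
  intro t
  induction t with
  | zero => simp
  | succ t ih =>
    show min (t + 1) m ≤ (mapStep A (mapProc A t)).card
    by_cases h : (Finset.univ \ mapProc A t).Nonempty
    · rw [mapStep_of_nonempty A h]
      have hmem := (maxFilt A (mapProc A t)).min'_mem (maxFilt_nonempty A h)
      have hnot : (maxFilt A (mapProc A t)).min' (maxFilt_nonempty A h) ∉ mapProc A t := by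
        have := (Finset.mem_filter.mp hmem).1
        exact (Finset.mem_sdiff.mp this).2
      rw [Finset.card_insert_of_notMem hnot]
      omega
    · rw [Finset.not_nonempty_iff_eq_empty, Finset.sdiff_eq_empty_iff_subset] at h
      have hXu : mapProc A t = Finset.univ := Finset.univ_subset_iff.mp h
      have hsub : (Finset.univ : Finset (Fin m)) ⊆ mapStep A (mapProc A t) :=
        hXu ▸ subset_mapStep A (mapProc A t)
      calc min (t + 1) m ≤ m := min_le_right _ _
        _ = (Finset.univ : Finset (Fin m)).card := by rw [Finset.card_univ, Fintype.card_fin]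
        _ ≤ _ := Finset.card_le_card hsub

lemma mapProc_m_eq_univ (A : V → Finset (Fin m)) : mapProc A m = Finset.univ := by
  apply Finset.eq_univ_of_card
  have h1 := min_le_card_mapProc A m
  simp only [min_self] at h1
  have h2 : (mapProc A m).card ≤ m := by
    have := Finset.card_le_univ (mapProc A m)
    rwa [Fintype.card_fin] at this
  rw [Fintype.card_fin]
  omega

lemma piCount_anti (A : V → Finset (Fin m)) (x : Fin m) {X X' : Finset (Fin m)}
    (h : X ⊆ X') : piCount A x X' ≤ piCount A x X := by
  apply Finset.card_le_card
  intro i hi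
  simp only [Finset.mem_filter, Finset.mem_univ, true_and] at *
  refine ⟨hi.1, ?_⟩
  have : A i ∩ X ⊆ A i ∩ X' := Finset.inter_subset_inter (Finset.Subset.refl _) h
  rw [hi.2] at this
  exact Finset.subset_empty.mp this

/-- If `x` enters the processed set exactly at step `t`, the share is given by the
count at that moment. -/
lemma mapShare_eq (A : V → Finset (Fin m)) (x : Fin m) (t : ℕ) (ht : t < m)
    (h1 : x ∈ mapProc A (t + 1)) (h0 : x ∉ mapProc A t) :
    mapShare A x = (piCount A x (mapProc A t) : ℝ) / (Fintype.card V) := by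
  rw [mapShare, Finset.sum_eq_single t]
  · rw [if_pos (Finset.mem_sdiff.mpr ⟨h1, h0⟩)]
  · intro s _ hst
    rw [if_neg]
    intro hmem
    rw [Finset.mem_sdiff] at hmem
    rcases Nat.lt_or_ge s t with h | h
    · exact h0 (mapProc_mono A (by omega) hmem.1)
    · have : t < s := lt_of_le_of_ne h (fun e => hst e.symm)
      exact hmem.2 (mapProc_mono A (by omega) h1)
  · intro h
    exact absurd (Finset.mem_range.mpr ht) h

section Mono

variable {n : ℕ} {A A' : Fin n → Finset (Fin m)} {i₀ : Fin n} {xstar : Fin m}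
  (hi₀ : A' i₀ = insert xstar (A i₀))
  (hrest : ∀ j, j ≠ i₀ → A' j = A j)

include hi₀ hrest

lemma piCount_eq_of_ne {X : Finset (Fin m)} (hX : xstar ∉ X) {y : Fin m} (hy : y ≠ xstar) :
    piCount A' y X = piCount A y X := by
  unfold piCount
  congr 1
  apply Finset.filter_congr
  intro i _
  by_cases h : i = i₀
  · subst h
    rw [hi₀, Finset.insert_inter_of_notMem hX, Finset.mem_insert]
    simp [hy]
  · rw [hrest i h]

lemma piCount_xstar_le {X : Finset (Fin m)} (hX : xstar ∉ X) :
    piCount A xstar X ≤ piCount A' xstar X := by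
  apply Finset.card_le_card
  intro i hi
  simp only [Finset.mem_filter, Finset.mem_univ, true_and] at *
  by_cases h : i = i₀
  · subst h
    rw [hi₀, Finset.insert_inter_of_notMem hX]
    exact ⟨Finset.mem_insert_self _ _, hi.2⟩
  · rwa [hrest i h]

/-- Key lemma: as long as `x*` has not been processed in the run of `A'`, the runs of
`A` and `A'` coincide. -/
lemma proc_eq_of_notMem : ∀ t, xstar ∉ mapProc A' t → mapProc A t = mapProc A' t := by
  intro t
  induction t with
  | zero => intro _; rfl
  | succ t ih =>
    intro h1
    have hx' : xstar ∉ mapProc A' t := fun h => h1 (subset_mapStep A' _ h)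
    have hXeq := ih hx'
    set X := mapProc A' t with hXdef
    have hne : (Finset.univ \ X).Nonempty :=
      ⟨xstar, Finset.mem_sdiff.mpr ⟨Finset.mem_univ _, hx'⟩⟩
    have hneA : (Finset.univ \ mapProc A t).Nonempty := by rw [hXeq]; exact hne
    have hstepA' : mapProc A' (t + 1) = insert ((maxFilt A' X).min' (maxFilt_nonempty A' hne)) X :=
      mapStep_of_nonempty A' hne
    set pA' := (maxFilt A' X).min' (maxFilt_nonempty A' hne) with hpA'def
    have hp' : pA' ≠ xstar := by
      intro h
      rw [hstepA'] at h1
      exact h1 (h ▸ Finset.mem_insert_self _ _)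
    have hpmem' : pA' ∈ maxFilt A' X := Finset.min'_mem _ _
    have hpS : pA' ∈ Finset.univ \ X := (Finset.mem_filter.mp hpmem').1
    have hmax' : ∀ y ∈ Finset.univ \ X, piCount A' y X ≤ piCount A' pA' X :=
      (Finset.mem_filter.mp hpmem').2
    -- M = piCount A' pA' X = piCount A pA' X
    have hMeq : piCount A pA' X = piCount A' pA' X := (piCount_eq_of_ne hi₀ hrest hx' hp').symm
    -- every A-count is at most M
    have hAle : ∀ y ∈ Finset.univ \ X, piCount A y X ≤ piCount A' pA' X := by
      intro y hy
      by_cases hyx : y = xstar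
      · subst hyx
        exact le_trans (piCount_xstar_le hi₀ hrest hx') (hmax' _ hy)
      · rw [← piCount_eq_of_ne hi₀ hrest hx' hyx]
        exact hmax' _ hy
    -- pA' is an A-maximizer
    have hpA'inF : pA' ∈ maxFilt A X := by
      refine Finset.mem_filter.mpr ⟨hpS, ?_⟩
      intro y hy
      rw [hMeq]
      exact hAle y hy
    -- any A-maximizer is an A'-maximizer
    have hFsub : maxFilt A X ⊆ maxFilt A' X := by
      intro z hz
      obtain ⟨hzS, hzmax⟩ := Finset.mem_filter.mp hz
      have hzM : piCount A z X = piCount A' pA' X :=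
        le_antisymm (hAle z hzS) (hMeq ▸ hzmax pA' hpS)
      have hzM' : piCount A' z X = piCount A' pA' X := by
        by_cases hzx : z = xstar
        · subst hzx
          exact le_antisymm (hmax' _ hzS)
            (hzM ▸ piCount_xstar_le hi₀ hrest hx')
        · rw [piCount_eq_of_ne hi₀ hrest hx' hzx, hzM]
      refine Finset.mem_filter.mpr ⟨hzS, ?_⟩
      intro y hy
      rw [hzM']
      exact hmax' y hy
    have hneF : (maxFilt A X).Nonempty := ⟨pA', hpA'inF⟩
    set pA := (maxFilt A X).min' hneF with hpAdef
    have hpApA' : pA = pA' := by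
      have h1le : pA ≤ pA' := Finset.min'_le _ _ hpA'inF
      have h2le : pA' ≤ pA := Finset.min'_le _ _ (hFsub (Finset.min'_mem _ _))
      exact le_antisymm h1le h2le
    have hstepA : mapProc A (t + 1) = insert ((maxFilt A (mapProc A t)).min'
        (maxFilt_nonempty A hneA)) (mapProc A t) := mapStep_of_nonempty A hneA
    rw [hstepA, hstepA']
    have : ((maxFilt A (mapProc A t)).min' (maxFilt_nonempty A hneA)) = pA := by
      congr 1 <;> rw [hXeq]
    rw [this, hpApA', hXeq]

end Mono

end MAPAux

/-- The maximum payment rule satisfies monotonicity: if `A'` arises from `A` by one voter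
adding candidate `x*` to his ballot, then `MAP(A', x*) ≥ MAP(A, x*)`. -/
theorem map_monotonicity {n m : ℕ} (A A' : Fin n → Finset (Fin m))
    (hA : ∀ i, (A i).Nonempty)
    (i₀ : Fin n) (xstar : Fin m)
    (hi₀ : A' i₀ = insert xstar (A i₀))
    (hrest : ∀ j, j ≠ i₀ → A' j = A j) :
    mapShare A xstar ≤ mapShare A' xstar := by
  classical
  have hm : 0 < m := xstar.pos
  -- entry time in the run of A'
  have hmm : m - 1 + 1 = m := by omega
  have hex' : ∃ t, xstar ∈ mapProc A' (t + 1) := by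
    refine ⟨m - 1, ?_⟩
    rw [hmm, MAPAux.mapProc_m_eq_univ]
    exact Finset.mem_univ _
  set t' := Nat.find hex' with ht'def
  have h1' : xstar ∈ mapProc A' (t' + 1) := Nat.find_spec hex'
  have ht'm : t' < m := by
    have : t' ≤ m - 1 := Nat.find_le (by
      rw [hmm, MAPAux.mapProc_m_eq_univ]; exact Finset.mem_univ _)
    omega
  have h0' : xstar ∉ mapProc A' t' := by
    rcases Nat.eq_zero_or_pos t' with h | h
    · rw [h]; simp [mapProc]
    · have h2 := Nat.find_min hex' (show t' - 1 < t' by omega)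
      have e : t' - 1 + 1 = t' := by omega
      rwa [e] at h2
  -- entry time in the run of A
  have hexA : ∃ t, xstar ∈ mapProc A (t + 1) := by
    refine ⟨m - 1, ?_⟩
    rw [hmm, MAPAux.mapProc_m_eq_univ]
    exact Finset.mem_univ _
  set tA := Nat.find hexA with htAdef
  have h1A : xstar ∈ mapProc A (tA + 1) := Nat.find_spec hexA
  have htAm : tA < m := by
    have : tA ≤ m - 1 := Nat.find_le (by
      rw [hmm, MAPAux.mapProc_m_eq_univ]; exact Finset.mem_univ _)
    omega
  have h0A : xstar ∉ mapProc A tA := by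
    rcases Nat.eq_zero_or_pos tA with h | h
    · rw [h]; simp [mapProc]
    · have h2 := Nat.find_min hexA (show tA - 1 < tA by omega)
      have e : tA - 1 + 1 = tA := by omega
      rwa [e] at h2
  -- runs agree up to t'
  have hXeq : mapProc A t' = mapProc A' t' := MAPAux.proc_eq_of_notMem hi₀ hrest t' h0'
  -- t' ≤ tA
  have ht'tA : t' ≤ tA := by
    by_contra h
    push_neg at h
    have : xstar ∈ mapProc A t' := MAPAux.mapProc_mono A (by omega) h1A
    rw [hXeq] at this
    exact h0' this
  have hsub : mapProc A' t' ⊆ mapProc A tA := by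
    rw [← hXeq]
    exact MAPAux.mapProc_mono A ht'tA
  -- the counts compare
  have hkey : piCount A xstar (mapProc A tA) ≤ piCount A' xstar (mapProc A' t') :=
    le_trans (MAPAux.piCount_anti A xstar hsub)
      (MAPAux.piCount_xstar_le hi₀ hrest h0')
  rw [MAPAux.mapShare_eq A xstar tA htAm h1A h0A,
    MAPAux.mapShare_eq A' xstar t' ht'm h1' h0']
  have hkey' : (piCount A xstar (mapProc A tA) : ℝ) ≤ piCount A' xstar (mapProc A' t') := by
    exact_mod_cast hkey
  apply div_le_div_of_nonneg_right hkey' (by positivity)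
end

section
/- For voter-disjoint profiles A (with n voters) and A' (with n' voters), if the maximum payment rule processes the first k candidates in the same order x₁,…,x_k on A, A', and A+A', then the MAP share of x_k in A+A' is the convex combination r(x_k) = (n/(n+n'))·p(x_k) + (n'/(n+n'))·q(x_k), where p = MAP(A) and q = MAP(A'). In particular min{p(x_k), q(x_k)} ≤ r(x_k) ≤ max{p(x_k), q(x_k)}. -/
open Finset

section Aux
variable {V : Type*} [Fintype V] {m : ℕ}

lemma mapProc_subset_succ (A : V → Finset (Fin m)) (t : ℕ) :
    mapProc A t ⊆ mapProc A (t + 1) := by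
  show mapProc A t ⊆ mapStep A (mapProc A t)
  unfold mapStep
  split
  · exact Finset.subset_insert _ _
  · exact Finset.Subset.refl _

lemma mapProc_mono (A : V → Finset (Fin m)) {s t : ℕ} (h : s ≤ t) :
    mapProc A s ⊆ mapProc A t := by
  induction t with
  | zero => simpa [Nat.le_zero.mp h]
  | succ t ih =>
    rcases Nat.lt_or_ge s (t + 1) with h' | h'
    · exact (ih (Nat.lt_succ_iff.mp h')).trans (mapProc_subset_succ A t)
    · have : s = t + 1 := le_antisymm h h'
      simp [this]

lemma mapProc_succ_eq (A : V → Finset (Fin m)) {k : ℕ} {x : ℕ → Fin m}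
    (hseq : ∀ t < k, mapProc A (t + 1) \ mapProc A t = {x t})
    {t : ℕ} (ht : t < k) :
    mapProc A (t + 1) = mapProc A t ∪ {x t} := by
  rw [← hseq t ht, Finset.union_sdiff_of_subset (mapProc_subset_succ A t)]

lemma mapProc_eq_image (A : V → Finset (Fin m)) {k : ℕ} {x : ℕ → Fin m}
    (hseq : ∀ t < k, mapProc A (t + 1) \ mapProc A t = {x t}) :
    ∀ t ≤ k, mapProc A t = (Finset.range t).image x := by
  intro t ht
  induction t with
  | zero => simp [mapProc]
  | succ t ih =>
    rw [mapProc_succ_eq A hseq ht, ih (Nat.le_of_succ_le ht),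
      Finset.range_add_one, Finset.image_insert]
    ext y; simp [or_comm]

lemma mapProc_card (A : V → Finset (Fin m)) {k : ℕ} {x : ℕ → Fin m}
    (hseq : ∀ t < k, mapProc A (t + 1) \ mapProc A t = {x t}) :
    ∀ t ≤ k, (mapProc A t).card = t := by
  intro t ht
  induction t with
  | zero => simp [mapProc]
  | succ t ih =>
    have h1 := Finset.card_sdiff_add_card_eq_card (mapProc_subset_succ A t)
    rw [hseq t ht] at h1
    simp only [Finset.card_singleton] at h1
    rw [ih (Nat.le_of_succ_le ht)] at h1
    omega
    
lemma k_le_m (A : V → Finset (Fin m)) {k : ℕ} {x : ℕ → Fin m}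
    (hseq : ∀ t < k, mapProc A (t + 1) \ mapProc A t = {x t}) : k ≤ m := by
  have := mapProc_card A hseq k le_rfl
  have h2 := Finset.card_le_univ (mapProc A k)
  simpa [this] using h2

lemma mapShare_eq (A : V → Finset (Fin m)) {k : ℕ} {x : ℕ → Fin m}
    (hk : 1 ≤ k) (hkm : k ≤ m)
    (hseq : ∀ t < k, mapProc A (t + 1) \ mapProc A t = {x t}) :
    mapShare A (x (k - 1))
      = (piCount A (x (k - 1)) (mapProc A (k - 1)) : ℝ) / (Fintype.card V) := by
  have hk1 : k - 1 < k := Nat.sub_lt hk one_pos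
  have hkk : k - 1 + 1 = k := Nat.succ_pred_eq_of_pos hk
  have hmem : x (k - 1) ∈ mapProc A (k - 1 + 1) \ mapProc A (k - 1) := by
    rw [hseq (k - 1) hk1]; exact Finset.mem_singleton_self _
  rw [mapShare]
  rw [Finset.sum_eq_single_of_mem (k - 1) (Finset.mem_range.mpr (lt_of_lt_of_le hk1 hkm))]
  · rw [if_pos hmem]
  · intro t _ hne
    rw [if_neg]
    intro hcon
    rw [Finset.mem_sdiff] at hmem hcon
    rcases Nat.lt_or_ge t (k - 1) with h' | h'
    · exact hmem.2 (mapProc_mono A (by omega : t + 1 ≤ k - 1) hcon.1)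
    · exact hcon.2 (mapProc_mono A (by omega : k - 1 + 1 ≤ t) hmem.1)

end Aux

lemma piCount_sum {n n' m : ℕ} (A : Fin n → Finset (Fin m)) (A' : Fin n' → Finset (Fin m))
    (y : Fin m) (X : Finset (Fin m)) :
    piCount (Sum.elim A A') y X = piCount A y X + piCount A' y X := by
  unfold piCount
  simp only [← Fintype.card_subtype]
  rw [← Fintype.card_sum]
  exact Fintype.card_congr (Equiv.subtypeSum)

lemma piCount_le {V : Type*} [Fintype V] {m : ℕ} (A : V → Finset (Fin m))
    (y : Fin m) (X : Finset (Fin m)) : piCount A y X ≤ Fintype.card V :=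
  (Finset.card_filter_le _ _).trans (le_of_eq rfl)
/-- If MAP processes the first `k` candidates in the same order `x 0, …, x (k−1)` on the
voter-disjoint profiles `A` (with `n` voters), `A'` (with `n'` voters), and the combined
profile `A + A'`, then the MAP share of `x (k−1)` in `A + A'` is the convex combination
`(n/(n+n'))·p(x (k−1)) + (n'/(n+n'))·q(x (k−1))`; in particular it lies between the
minimum and the maximum of the two shares. -/
theorem map_ranked_population_consistency {n n' m : ℕ}
    (A : Fin n → Finset (Fin m)) (A' : Fin n' → Finset (Fin m))
    (hA : ∀ i, (A i).Nonempty) (hA' : ∀ i, (A' i).Nonempty)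
    (k : ℕ) (hk : 1 ≤ k) (x : ℕ → Fin m)
    (hseqA : ∀ t < k, mapProc A (t + 1) \ mapProc A t = {x t})
    (hseqA' : ∀ t < k, mapProc A' (t + 1) \ mapProc A' t = {x t})
    (hseqB : ∀ t < k,
      mapProc (Sum.elim A A') (t + 1) \ mapProc (Sum.elim A A') t = {x t}) :
    mapShare (Sum.elim A A') (x (k - 1))
        = ((n : ℝ) / ((n : ℝ) + n')) * mapShare A (x (k - 1))
          + ((n' : ℝ) / ((n : ℝ) + n')) * mapShare A' (x (k - 1)) ∧
      min (mapShare A (x (k - 1))) (mapShare A' (x (k - 1)))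
        ≤ mapShare (Sum.elim A A') (x (k - 1)) ∧
      mapShare (Sum.elim A A') (x (k - 1))
        ≤ max (mapShare A (x (k - 1))) (mapShare A' (x (k - 1))) := by

  have hkm : k ≤ m := k_le_m A hseqA
  have hk1 : k - 1 ≤ k := Nat.sub_le _ _
  have hXA : mapProc A (k - 1) = (Finset.range (k - 1)).image x :=
    mapProc_eq_image A hseqA (k - 1) hk1
  have hXA' : mapProc A' (k - 1) = (Finset.range (k - 1)).image x :=
    mapProc_eq_image A' hseqA' (k - 1) hk1
  have hXB : mapProc (Sum.elim A A') (k - 1) = (Finset.range (k - 1)).image x :=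
    mapProc_eq_image (Sum.elim A A') hseqB (k - 1) hk1
  set X : Finset (Fin m) := (Finset.range (k - 1)).image x with hXdef
  set y : Fin m := x (k - 1) with hydef
  have hpA := mapShare_eq A hk hkm hseqA
  have hpA' := mapShare_eq A' hk hkm hseqA'
  have hpB := mapShare_eq (Sum.elim A A') hk hkm hseqB
  rw [hXA] at hpA
  rw [hXA'] at hpA'
  rw [hXB, piCount_sum] at hpB
  simp only [Fintype.card_fin, Fintype.card_sum] at hpA hpA' hpB
  set a : ℝ := (piCount A y X : ℝ) with hadef
  set b : ℝ := (piCount A' y X : ℝ) with hbdef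
  have hpB' : mapShare (Sum.elim A A') y = (a + b) / ((n : ℝ) + n') := by
    rw [hpB]; push_cast; ring
  have ha0 : 0 ≤ a := by positivity
  have hb0 : 0 ≤ b := by positivity
  have han : a ≤ n := by
    have := piCount_le A y X
    simp only [Fintype.card_fin] at this
    rw [hadef]
    exact_mod_cast this
  have hbn : b ≤ n' := by
    have := piCount_le A' y X
    simp only [Fintype.card_fin] at this
    rw [hbdef]
    exact_mod_cast this
  have ha : a = (n : ℝ) * (a / n) := by
    rcases Nat.eq_zero_or_pos n with h | h
    · have : a = 0 := le_antisymm (by simpa [h] using han) ha0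
      simp [this]
    · field_simp
  have hb : b = (n' : ℝ) * (b / n') := by
    rcases Nat.eq_zero_or_pos n' with h | h
    · have : b = 0 := le_antisymm (by simpa [h] using hbn) hb0
      simp [this]
    · field_simp
  have heq : mapShare (Sum.elim A A') y
      = ((n : ℝ) / ((n : ℝ) + n')) * mapShare A y
        + ((n' : ℝ) / ((n : ℝ) + n')) * mapShare A' y := by
    rw [hpB', hpA, hpA', div_mul_eq_mul_div, div_mul_eq_mul_div, ← ha, ← hb,
      ← add_div]
  refine ⟨heq, ?_, ?_⟩
  · rcases Nat.eq_zero_or_pos (n + n') with h | h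
    · have hn : n = 0 := by omega
      have hn' : n' = 0 := by omega
      have haz : a = 0 := le_antisymm (by simpa [hn] using han) ha0
      have hbz : b = 0 := le_antisymm (by simpa [hn'] using hbn) hb0
      rw [hpB', hpA, hpA', haz, hbz]
      norm_num
    · have hpos : (0 : ℝ) < (n : ℝ) + n' := by
        exact_mod_cast h
      rw [hpB', hpA, hpA', le_div_iff₀ hpos]
      have h1 : (n : ℝ) * min (a / n) (b / n') ≤ (n : ℝ) * (a / n) :=
        mul_le_mul_of_nonneg_left (min_le_left _ _) (Nat.cast_nonneg n)
      have h2 : (n' : ℝ) * min (a / n) (b / n') ≤ (n' : ℝ) * (b / n') :=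
        mul_le_mul_of_nonneg_left (min_le_right _ _) (Nat.cast_nonneg n')
      nlinarith [ha, hb]
  · rcases Nat.eq_zero_or_pos (n + n') with h | h
    · have hn : n = 0 := by omega
      have hn' : n' = 0 := by omega
      have haz : a = 0 := le_antisymm (by simpa [hn] using han) ha0
      have hbz : b = 0 := le_antisymm (by simpa [hn'] using hbn) hb0
      rw [hpB', hpA, hpA', haz, hbz]
      norm_num
    · have hpos : (0 : ℝ) < (n : ℝ) + n' := by
        exact_mod_cast h
      rw [hpB', hpA, hpA', div_le_iff₀ hpos]
      have h1 : (n : ℝ) * (a / n) ≤ (n : ℝ) * max (a / n) (b / n') :=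
        mul_le_mul_of_nonneg_left (le_max_left _ _) (Nat.cast_nonneg n)
      have h2 : (n' : ℝ) * (b / n') ≤ (n' : ℝ) * max (a / n) (b / n') :=
        mul_le_mul_of_nonneg_left (le_max_right _ _) (Nat.cast_nonneg n')
      nlinarith [ha, hb]
end

section
/- The maximum payment rule satisfies 2-AFS: for every approval profile A with n voters, every group S ⊆ N with a commonly approved candidate satisfies ∑_{i∈S} u_i(MAP(A)) ≥ |S|²/(2n). -/
open Finset

lemma mapStep_spec {V : Type*} [Fintype V] {m : ℕ} (A : V → Finset (Fin m))
    (X : Finset (Fin m)) (h : (Finset.univ \ X).Nonempty) :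
    ∃ c, c ∉ X ∧ mapStep A X = insert c X ∧
      ∀ y, y ∉ X → piCount A y X ≤ piCount A c X := by
  classical
  have hne : (((Finset.univ \ X).filter fun x =>
      ∀ y ∈ Finset.univ \ X, piCount A y X ≤ piCount A x X)).Nonempty := by
    obtain ⟨b, hb, hmax⟩ :=
      Finset.exists_max_image (Finset.univ \ X) (fun x => piCount A x X) h
    exact ⟨b, Finset.mem_filter.2 ⟨hb, hmax⟩⟩
  have hc := Finset.min'_mem _ hne
  rw [Finset.mem_filter, Finset.mem_sdiff] at hc
  refine ⟨_, hc.1.2, ?_, fun y hy => hc.2 y (Finset.mem_sdiff.2 ⟨Finset.mem_univ y, hy⟩)⟩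
  simp only [mapStep, dif_pos h]

lemma mapProc_eq_univ {V : Type*} [Fintype V] {m : ℕ} (A : V → Finset (Fin m)) :
    mapProc A m = Finset.univ := by
  classical
  have key : ∀ t, mapProc A t = Finset.univ ∨ (mapProc A t).card = t := by
    intro t
    induction t with
    | zero => right; simp [mapProc]
    | succ t ih =>
      rcases ih with h | h
      · left
        simp [mapProc, mapStep, h]
      · by_cases hne : (Finset.univ \ mapProc A t).Nonempty
        · obtain ⟨c, hc, heq, -⟩ := mapStep_spec A (mapProc A t) hne
          right
          rw [mapProc, heq, Finset.card_insert_of_notMem hc, h]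
        · left
          have h2 : mapProc A t = Finset.univ := by
            have h3 := Finset.not_nonempty_iff_eq_empty.1 hne
            rw [Finset.sdiff_eq_empty_iff_subset] at h3
            exact Finset.univ_subset_iff.1 h3
          simp [mapProc, mapStep, h2]
  rcases key m with h | h
  · exact h
  · apply Finset.eq_univ_of_card
    simp [h]

/-- The maximum payment rule satisfies 2-AFS: for every approval profile `A` with `n`
voters, every group `S` of voters with a commonly approved candidate satisfies
`∑_{i∈S} u_i(MAP(A)) ≥ |S|²/(2n)`. -/
theorem map_two_afs {n m : ℕ} (A : Fin n → Finset (Fin m))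
    (hA : ∀ i, (A i).Nonempty)
    (S : Finset (Fin n)) (hS : ∃ x, ∀ i ∈ S, x ∈ A i) :
    (S.card : ℝ) ^ 2 / (2 * n) ≤ ∑ i ∈ S, ∑ x ∈ A i, mapShare A x := by
  classical
  rcases Nat.eq_zero_or_pos n with hn | hn
  · subst hn
    have hS0 : S = ∅ := Finset.eq_empty_of_forall_notMem fun i _ => i.elim0
    simp [hS0]
  obtain ⟨xs, hxs⟩ := hS
  have hn' : (0 : ℝ) < n := by exact_mod_cast hn
  set f : ℕ → ℕ := fun t => (S.filter fun i => (A i ∩ mapProc A t).Nonempty).card with hf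
  have hfS : ∀ t, f t ≤ S.card := fun t => Finset.card_filter_le _ _
  have hf0 : f 0 = 0 := by simp [hf, mapProc]
  have hfm : f m = S.card := by
    have hall : ∀ i ∈ S, (A i ∩ mapProc A m).Nonempty := by
      intro i hi
      rw [mapProc_eq_univ, Finset.inter_univ]
      exact hA i
    simp only [hf]
    rw [Finset.filter_true_of_mem hall]
  -- per-step bound
  have hstep : ∀ t, (((S.card : ℝ) - f t) ^ 2 - ((S.card : ℝ) - f (t + 1)) ^ 2) / (2 * n)
      ≤ ∑ i ∈ S, ∑ x ∈ A i,
          (if x ∈ mapProc A (t + 1) \ mapProc A t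
            then (piCount A x (mapProc A t) : ℝ) / n else 0) := by
    intro t
    by_cases hne : (Finset.univ \ mapProc A t).Nonempty
    · -- a new candidate c is processed at step t
      obtain ⟨c, hcX, heq, hmax⟩ := mapStep_spec A (mapProc A t) hne
      have hins : mapProc A (t + 1) = insert c (mapProc A t) := by
        rw [mapProc]; exact heq
      have hdiff : mapProc A (t + 1) \ mapProc A t = {c} := by
        rw [hins]
        ext y
        simp only [Finset.mem_sdiff, Finset.mem_insert, Finset.mem_singleton]
        constructor
        · rintro ⟨h | h, hy⟩
          · exact h
          · exact absurd h hy
        · rintro rfl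
          exact ⟨Or.inl rfl, hcX⟩
      set pc : ℝ := (piCount A c (mapProc A t) : ℝ) with hpcdef
      have hpc0 : 0 ≤ pc := by positivity
      have hinner : ∀ i, (∑ x ∈ A i, if x ∈ mapProc A (t + 1) \ mapProc A t
            then (piCount A x (mapProc A t) : ℝ) / n else 0)
          = if c ∈ A i then pc / n else 0 := by
        intro i
        rw [hdiff]
        simp only [Finset.mem_singleton]
        exact Finset.sum_ite_eq' (A i) c _
      set T : Finset (Fin n) := S.filter fun i => c ∈ A i with hT
      set Sh : Finset (Fin n) := S.filter fun i => c ∈ A i ∧ A i ∩ mapProc A t = ∅ with hSh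
      have hsum : (∑ i ∈ S, ∑ x ∈ A i, if x ∈ mapProc A (t + 1) \ mapProc A t
            then (piCount A x (mapProc A t) : ℝ) / n else 0)
          = (T.card : ℝ) * (pc / n) := by
        calc (∑ i ∈ S, ∑ x ∈ A i, if x ∈ mapProc A (t + 1) \ mapProc A t
              then (piCount A x (mapProc A t) : ℝ) / n else 0)
            = ∑ i ∈ S, if c ∈ A i then pc / n else 0 :=
              Finset.sum_congr rfl fun i _ => hinner i
          _ = ∑ i ∈ T, pc / n := (Finset.sum_filter _ _).symm
          _ = (T.card : ℝ) * (pc / n) := by rw [Finset.sum_const, nsmul_eq_mul]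
      -- f (t+1) = f t + Sh.card
      have hcovsucc : (S.filter fun i => (A i ∩ mapProc A (t + 1)).Nonempty)
          = (S.filter fun i => (A i ∩ mapProc A t).Nonempty) ∪ Sh := by
        ext i
        simp only [Finset.mem_union, Finset.mem_filter, hSh, hins]
        constructor
        · rintro ⟨hiS, y, hy⟩
          rw [Finset.mem_inter, Finset.mem_insert] at hy
          by_cases hd : (A i ∩ mapProc A t).Nonempty
          · exact Or.inl ⟨hiS, hd⟩
          · rcases hy with ⟨hyA, rfl | hyX⟩
            · exact Or.inr ⟨hiS, hyA, Finset.not_nonempty_iff_eq_empty.1 hd⟩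
            · exact absurd ⟨y, Finset.mem_inter.2 ⟨hyA, hyX⟩⟩ hd
        · rintro (⟨hiS, y, hy⟩ | ⟨hiS, hcA, -⟩)
          · rw [Finset.mem_inter] at hy
            exact ⟨hiS, y, Finset.mem_inter.2 ⟨hy.1, Finset.mem_insert_of_mem hy.2⟩⟩
          · exact ⟨hiS, c, Finset.mem_inter.2 ⟨hcA, Finset.mem_insert_self _ _⟩⟩
      have hdisj : Disjoint (S.filter fun i => (A i ∩ mapProc A t).Nonempty) Sh := by
        rw [Finset.disjoint_left]
        intro i hi hi'
        rw [Finset.mem_filter] at hi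
        rw [hSh, Finset.mem_filter] at hi'
        rw [hi'.2.2] at hi
        exact absurd hi.2 (by simp)
      have hcard : f (t + 1) = f t + Sh.card := by
        simp only [hf]
        rw [hcovsucc, Finset.card_union_of_disjoint hdisj]
      have hShT : Sh.card ≤ T.card := by
        apply Finset.card_le_card
        intro i hi
        rw [hSh, Finset.mem_filter] at hi
        rw [hT, Finset.mem_filter]
        exact ⟨hi.1, hi.2.1⟩
      -- pc ≥ S.card - f t
      have hpc : (S.card : ℝ) - f t ≤ pc := by
        by_cases hxmem : xs ∈ mapProc A t
        · have : f t = S.card := by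
            simp only [hf]
            rw [Finset.filter_true_of_mem fun i hi => ⟨xs, Finset.mem_inter.2 ⟨hxs i hi, hxmem⟩⟩]
          rw [this]
          simpa using hpc0
        · have h1 : piCount A xs (mapProc A t) ≤ piCount A c (mapProc A t) := hmax xs hxmem
          have h2 : (S.filter fun i => A i ∩ mapProc A t = ∅).card
              ≤ piCount A xs (mapProc A t) := by
            apply Finset.card_le_card
            intro i hi
            rw [Finset.mem_filter] at hi
            simp only [piCount, Finset.mem_filter]
            exact ⟨Finset.mem_univ i, hxs i hi.1, hi.2⟩
          have h3 : f t + (S.filter fun i => A i ∩ mapProc A t = ∅).card = S.card := by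
            have hfn : (S.filter fun i => A i ∩ mapProc A t = ∅)
                = S.filter fun i => ¬(A i ∩ mapProc A t).Nonempty := by
              apply Finset.filter_congr
              intro i _
              simp [Finset.not_nonempty_iff_eq_empty]
            simp only [hf]
            rw [hfn]
            exact Finset.card_filter_add_card_filter_not _
          have h4 : S.card ≤ f t + piCount A c (mapProc A t) := by omega
          have := hfS t
          rw [hpcdef]
          push_cast
          have h5 : (S.card : ℝ) ≤ (f t : ℝ) + (piCount A c (mapProc A t) : ℝ) := by
            exact_mod_cast h4
          linarith
      -- combine
      rw [hsum]
      have hftle : (f t : ℝ) ≤ (S.card : ℝ) := by exact_mod_cast hfS t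
      have hShT' : (Sh.card : ℝ) ≤ (T.card : ℝ) := by exact_mod_cast hShT
      have hfsucc : (f (t + 1) : ℝ) = (f t : ℝ) + (Sh.card : ℝ) := by
        exact_mod_cast hcard
      have hSh0 : (0 : ℝ) ≤ (Sh.card : ℝ) := by positivity
      have key : ((S.card : ℝ) - f t) ^ 2 - ((S.card : ℝ) - f (t + 1)) ^ 2
          ≤ 2 * ((T.card : ℝ) * pc) := by
        rw [hfsucc]
        nlinarith [mul_le_mul_of_nonneg_left hpc hSh0,
          mul_le_mul_of_nonneg_right hShT' hpc0]
      rw [div_le_iff₀ (by positivity : (0 : ℝ) < 2 * n)]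
      rw [mul_comm (T.card : ℝ) (pc / n)]
      rw [div_mul_eq_mul_div, div_mul_eq_mul_div, le_div_iff₀ hn']
      nlinarith [key, hn'.le]
    · -- no new candidate: step is trivial
      have hXu : mapProc A t = Finset.univ := by
        have h3 := Finset.not_nonempty_iff_eq_empty.1 hne
        rw [Finset.sdiff_eq_empty_iff_subset] at h3
        exact Finset.univ_subset_iff.1 h3
      have h1 : mapProc A (t + 1) = mapProc A t := by
        rw [mapProc, mapStep, dif_neg hne]
      have hfeq : f (t + 1) = f t := by simp only [hf, h1]
      rw [h1, hfeq]
      simp [Finset.sdiff_self]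
  -- swap sums and conclude
  have hswap : (∑ i ∈ S, ∑ x ∈ A i, mapShare A x)
      = ∑ t ∈ Finset.range m, ∑ i ∈ S, ∑ x ∈ A i,
          (if x ∈ mapProc A (t + 1) \ mapProc A t
            then (piCount A x (mapProc A t) : ℝ) / n else 0) := by
    simp only [mapShare, Fintype.card_fin]
    calc (∑ i ∈ S, ∑ x ∈ A i, ∑ t ∈ Finset.range m,
            if x ∈ mapProc A (t + 1) \ mapProc A t
              then (piCount A x (mapProc A t) : ℝ) / n else 0)
        = ∑ i ∈ S, ∑ t ∈ Finset.range m, ∑ x ∈ A i,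
            (if x ∈ mapProc A (t + 1) \ mapProc A t
              then (piCount A x (mapProc A t) : ℝ) / n else 0) :=
          Finset.sum_congr rfl fun i _ => Finset.sum_comm
      _ = _ := Finset.sum_comm
  rw [hswap]
  calc (S.card : ℝ) ^ 2 / (2 * n)
      = ∑ t ∈ Finset.range m,
          ((((S.card : ℝ) - f t) ^ 2 - ((S.card : ℝ) - f (t + 1)) ^ 2) / (2 * n)) := by
        rw [← Finset.sum_div,
          Finset.sum_range_sub' (fun t => ((S.card : ℝ) - f t) ^ 2)]
        rw [hf0, hfm]
        push_cast
        ring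
    _ ≤ _ := Finset.sum_le_sum fun t _ => hstep t
end

section
/- For every ε > 0 there is a profile on which the maximum payment rule fails (2−ε)-AFS: for ℓ ∈ ℕ with (2−ε)(ℓ+3) < 2ℓ, the profile with candidates {x₁,…,x_ℓ, x*} and n = ℓ + ℓ(ℓ+1)/2 voters — one voter reporting {x_i, x*} for each i ∈ [ℓ], and ℓ+1−i voters reporting {x_i} for each i ∈ [ℓ] — yields a MAP distribution p with p(x_i) = (ℓ+2−i)/n and p(x*) = 0, so the group S of the ℓ voters approving x* has total utility ∑_{i∈S} u_i(p) = 1 < (1/(2−ε))·|S|²/n. -/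
open Finset

/-- The voter set of the lower-bound profile: for each `i ∈ [ℓ]` one voter reporting
`{x_i, x*}`, and `ℓ − i` further voters reporting `{x_i}` (zero-indexed `i`). -/
abbrev V12 (ℓ : ℕ) := Fin ℓ ⊕ ((i : Fin ℓ) × Fin (ℓ - (i : ℕ)))

/-- The ballots of the lower-bound profile over candidates `Fin (ℓ+1)`; `x*` is
`Fin.last ℓ` and `x_i` (zero-indexed) is `i.castSucc`. -/
abbrev A12 (ℓ : ℕ) : V12 ℓ → Finset (Fin (ℓ + 1)) :=
  Sum.elim (fun i => {i.castSucc, Fin.last ℓ}) (fun w => {(w.1).castSucc})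

def Dset (ℓ t : ℕ) : Finset (Fin (ℓ+1)) := univ.filter (fun x => (x:ℕ) < t)

lemma mem_Dset {ℓ t : ℕ} {x : Fin (ℓ+1)} : x ∈ Dset ℓ t ↔ (x:ℕ) < t := by
  simp [Dset]

lemma card_filter_sum {α β : Type*} [Fintype α] [Fintype β] (p : α ⊕ β → Prop)
    [DecidablePred p] :
    (univ.filter p).card =
      (univ.filter (fun a => p (Sum.inl a))).card +
      (univ.filter (fun b => p (Sum.inr b))).card := by
  rw [Finset.card_filter, Finset.card_filter, Finset.card_filter, Fintype.sum_sum_type]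

lemma disj_iff {ℓ t : ℕ} (s : Finset (Fin (ℓ+1))) :
    s ∩ Dset ℓ t = ∅ ↔ ∀ a ∈ s, t ≤ (a:ℕ) := by
  rw [Finset.eq_empty_iff_forall_notMem]
  constructor
  · intro h a ha
    by_contra hlt
    exact h a (Finset.mem_inter.2 ⟨ha, mem_Dset.2 (by omega)⟩)
  · intro h a ha
    rw [Finset.mem_inter, mem_Dset] at ha
    exact absurd ha.2 (not_lt.2 (h a ha.1))

lemma card_filter_le_fin (ℓ t : ℕ) (ht : t ≤ ℓ) :
    (univ.filter fun i : Fin ℓ => t ≤ (i:ℕ)).card = ℓ - t := by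
  have h1 : (univ.filter fun i : Fin ℓ => t ≤ (i:ℕ)).card
      = ((range ℓ).filter fun i => t ≤ i).card := by
    rw [Finset.card_filter, Finset.card_filter,
      ← Fin.sum_univ_eq_sum_range (fun i => if t ≤ i then 1 else 0) ℓ]
  have h2 : (range ℓ).filter (fun i => t ≤ i) = Finset.Ico t ℓ := by
    ext a; simp [Finset.mem_Ico, and_comm]
  rw [h1, h2, Nat.card_Ico]

lemma card_filter_sigma {ℓ : ℕ} (p : (w : (i : Fin ℓ) × Fin (ℓ - (i:ℕ))) → Prop)
    [DecidablePred p] (q : Fin ℓ → Prop) [DecidablePred q]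
    (hpq : ∀ w, p w ↔ q w.1) :
    (univ.filter p).card = ∑ i : Fin ℓ, if q i then ℓ - (i:ℕ) else 0 := by
  rw [Finset.card_filter, ← Finset.univ_sigma_univ, Finset.sum_sigma]
  refine Finset.sum_congr rfl fun i _ => ?_
  by_cases h : q i <;> simp [hpq, h]

lemma pi_cast {ℓ : ℕ} (t : ℕ) (j : Fin ℓ) (hj : t ≤ (j:ℕ)) :
    piCount (A12 ℓ) j.castSucc (Dset ℓ t) = ℓ + 1 - (j:ℕ) := by
  rw [piCount, card_filter_sum]
  have h1 : (univ.filter fun i : Fin ℓ =>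
      j.castSucc ∈ A12 ℓ (Sum.inl i) ∧ A12 ℓ (Sum.inl i) ∩ Dset ℓ t = ∅) = {j} := by
    ext i
    simp only [Sum.elim_inl, Finset.mem_filter, Finset.mem_univ, true_and,
      Finset.mem_insert, Finset.mem_singleton, disj_iff, Fin.ext_iff,
      Fin.coe_castSucc, Fin.val_last]
    have hjl : (j:ℕ) < ℓ := j.isLt
    constructor
    · rintro ⟨h, _⟩; omega
    · intro h
      exact ⟨by omega, fun a ha => by omega⟩
  have h2 : (univ.filter fun w : (i : Fin ℓ) × Fin (ℓ - (i:ℕ)) =>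
      j.castSucc ∈ A12 ℓ (Sum.inr w) ∧ A12 ℓ (Sum.inr w) ∩ Dset ℓ t = ∅).card
      = ∑ i : Fin ℓ, if i = j then ℓ - (i:ℕ) else 0 := by
    refine card_filter_sigma _ (fun i => i = j) fun w => ?_
    simp only [Sum.elim_inr, Finset.mem_singleton, disj_iff,
      Fin.ext_iff, Fin.coe_castSucc]
    have := w.1.isLt
    have := j.isLt
    constructor
    · rintro ⟨h, _⟩; omega
    · intro h; exact ⟨by omega, fun a ha => by omega⟩
  rw [h1, h2, Finset.card_singleton, Finset.sum_ite_eq' univ j (fun i => ℓ - (i:ℕ))]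
  have := j.isLt
  simp; omega

lemma pi_last {ℓ : ℕ} (t : ℕ) (ht : t ≤ ℓ) :
    piCount (A12 ℓ) (Fin.last ℓ) (Dset ℓ t) = ℓ - t := by
  rw [piCount, card_filter_sum]
  have h1 : (univ.filter fun i : Fin ℓ =>
      Fin.last ℓ ∈ A12 ℓ (Sum.inl i) ∧ A12 ℓ (Sum.inl i) ∩ Dset ℓ t = ∅)
      = univ.filter fun i : Fin ℓ => t ≤ (i:ℕ) := by
    ext i
    simp only [Sum.elim_inl, Finset.mem_filter, Finset.mem_univ, true_and,
      Finset.mem_insert, Finset.mem_singleton, disj_iff, Fin.ext_iff,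
      Fin.coe_castSucc, Fin.val_last]
    have := i.isLt
    constructor
    · rintro ⟨_, h⟩
      exact h i.castSucc (by simp)
    · intro h
      exact ⟨Or.inr trivial, fun a ha => by omega⟩
  have h2 : (univ.filter fun w : (i : Fin ℓ) × Fin (ℓ - (i:ℕ)) =>
      Fin.last ℓ ∈ A12 ℓ (Sum.inr w) ∧ A12 ℓ (Sum.inr w) ∩ Dset ℓ t = ∅).card
      = ∑ i : Fin ℓ, if False then ℓ - (i:ℕ) else 0 := by
    refine card_filter_sigma _ (fun _ => False) fun w => ?_
    simp only [Sum.elim_inr, Finset.mem_singleton, Fin.ext_iff,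
      Fin.coe_castSucc, Fin.val_last, iff_false, not_and]
    have := w.1.isLt
    intro h; omega
  rw [h1, h2, card_filter_le_fin ℓ t ht]
  simp

lemma pi_any_le {ℓ t : ℕ} (ht : t ≤ ℓ) {y : Fin (ℓ+1)} (hy : t ≤ (y:ℕ)) :
    piCount (A12 ℓ) y (Dset ℓ t) ≤ ℓ + 1 - t := by
  by_cases hyl : (y:ℕ) = ℓ
  · have hyy : y = Fin.last ℓ := Fin.ext hyl
    rw [hyy, pi_last t ht]; omega
  · have hlt : (y:ℕ) < ℓ := by have := y.isLt; omega
    have hyy : y = (⟨(y:ℕ), hlt⟩ : Fin ℓ).castSucc := Fin.ext rfl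
    rw [hyy, pi_cast t ⟨(y:ℕ), hlt⟩ (by simpa using hy)]
    simp only [Fin.val_mk]; omega

lemma mapStep_Dset (ℓ t : ℕ) (ht : t ≤ ℓ) :
    mapStep (A12 ℓ) (Dset ℓ t) = Dset ℓ (t+1) := by
  have htl : t < ℓ + 1 := by omega
  have hmemD : (⟨t, htl⟩ : Fin (ℓ+1)) ∈ univ \ Dset ℓ t := by
    simp [Finset.mem_sdiff, mem_Dset]
  have hne : (univ \ Dset ℓ t).Nonempty := ⟨_, hmemD⟩
  rw [mapStep, dif_pos hne]
  set S := (univ \ Dset ℓ t).filter fun x =>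
      ∀ y ∈ univ \ Dset ℓ t, piCount (A12 ℓ) y (Dset ℓ t) ≤ piCount (A12 ℓ) x (Dset ℓ t)
    with hS
  have hSne : S.Nonempty := by
    obtain ⟨b, hb, hmax⟩ :=
      Finset.exists_max_image (univ \ Dset ℓ t) (fun x => piCount (A12 ℓ) x (Dset ℓ t)) hne
    exact ⟨b, Finset.mem_filter.2 ⟨hb, hmax⟩⟩
  have hbound : ∀ y ∈ univ \ Dset ℓ t,
      piCount (A12 ℓ) y (Dset ℓ t) ≤ piCount (A12 ℓ) (⟨t, htl⟩ : Fin (ℓ+1)) (Dset ℓ t) := by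
    intro y hy
    have hyt : t ≤ (y:ℕ) := by
      have := (Finset.mem_sdiff.1 hy).2
      rw [mem_Dset] at this; omega
    rcases Nat.lt_or_ge t ℓ with hlt | hge
    · have : (⟨t, htl⟩ : Fin (ℓ+1)) = (⟨t, hlt⟩ : Fin ℓ).castSucc := Fin.ext rfl
      rw [this, pi_cast t _ le_rfl]
      exact pi_any_le (le_of_lt hlt) hyt
    · have htℓ : t = ℓ := by omega
      have hyy : y = (⟨t, htl⟩ : Fin (ℓ+1)) := by
        apply Fin.ext; have := y.isLt; simp; omega
      rw [hyy]
  have hmemS : (⟨t, htl⟩ : Fin (ℓ+1)) ∈ S := Finset.mem_filter.2 ⟨hmemD, hbound⟩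
  have hmin : ∀ (h : S.Nonempty), S.min' h = (⟨t, htl⟩ : Fin (ℓ+1)) := by
    intro h
    apply Fin.ext
    have h1 : S.min' h ≤ ⟨t, htl⟩ := Finset.min'_le S _ hmemS
    have h2 : S.min' h ∈ univ \ Dset ℓ t := (Finset.mem_filter.1 (Finset.min'_mem S h)).1
    have h3 : t ≤ ((S.min' h : Fin (ℓ+1)) : ℕ) := by
      have := (Finset.mem_sdiff.1 h2).2
      rw [mem_Dset] at this; omega
    have h4 : ((S.min' h : Fin (ℓ+1)) : ℕ) ≤ t := h1
    simp only [Fin.val_mk]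
    omega
  rw [hmin]
  ext x
  simp only [Finset.mem_insert, mem_Dset, Fin.ext_iff]
  omega

lemma mapProc_Dset (ℓ : ℕ) : ∀ t, t ≤ ℓ + 1 → mapProc (A12 ℓ) t = Dset ℓ t := by
  intro t
  induction t with
  | zero => intro _; ext x; simp [mapProc, mem_Dset]
  | succ t ih =>
    intro h
    rw [mapProc, ih (by omega), mapStep_Dset ℓ t (by omega)]

lemma share_cast (ℓ : ℕ) (j : Fin ℓ) :
    mapShare (A12 ℓ) j.castSucc = ((ℓ:ℝ) + 1 - (j:ℕ)) / (Fintype.card (V12 ℓ)) := by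
  have hj := j.isLt
  rw [mapShare]
  rw [Finset.sum_eq_single_of_mem (j:ℕ) (Finset.mem_range.2 (by omega))]
  · have hcond : j.castSucc ∈ mapProc (A12 ℓ) ((j:ℕ)+1) \ mapProc (A12 ℓ) (j:ℕ) := by
      rw [mapProc_Dset ℓ _ (by omega), mapProc_Dset ℓ _ (by omega)]
      simp [Finset.mem_sdiff, mem_Dset]
    rw [if_pos hcond, mapProc_Dset ℓ _ (by omega), pi_cast (j:ℕ) j le_rfl]
    congr 1
    rw [Nat.cast_sub (by omega)]
    push_cast; ring
  · intro t ht hne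
    have ht' := Finset.mem_range.1 ht
    rw [mapProc_Dset ℓ (t+1) (by omega), mapProc_Dset ℓ t (by omega), if_neg]
    simp only [Finset.mem_sdiff, mem_Dset, Fin.coe_castSucc, not_and, not_not]
    intro h; omega

lemma share_last (ℓ : ℕ) : mapShare (A12 ℓ) (Fin.last ℓ) = 0 := by
  rw [mapShare]
  apply Finset.sum_eq_zero
  intro t ht
  have ht' := Finset.mem_range.1 ht
  by_cases h : t = ℓ
  · rw [if_pos, mapProc_Dset ℓ t (by omega), pi_last t (by omega),
      show ℓ - t = 0 from by omega]
    · simp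
    · rw [mapProc_Dset ℓ (t+1) (by omega), mapProc_Dset ℓ t (by omega)]
      simp only [Finset.mem_sdiff, mem_Dset, Fin.val_last, not_lt]
      omega
  · rw [if_neg]
    rw [mapProc_Dset ℓ (t+1) (by omega), mapProc_Dset ℓ t (by omega)]
    simp only [Finset.mem_sdiff, mem_Dset, Fin.val_last, not_and, not_not]
    intro h'; omega

lemma card_V12 (ℓ : ℕ) : Fintype.card (V12 ℓ) = ℓ + ℓ * (ℓ + 1) / 2 := by
  have h1 : Fintype.card (V12 ℓ) = ℓ + ∑ i : Fin ℓ, (ℓ - (i:ℕ)) := by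
    simp [Fintype.card_sum, Fintype.card_sigma, Fintype.card_fin]
  have h2 : ∑ i : Fin ℓ, (ℓ - (i:ℕ)) = ∑ i ∈ range ℓ, (ℓ - i) :=
    Fin.sum_univ_eq_sum_range (fun i => ℓ - i) ℓ
  have h3 : ∑ i ∈ range ℓ, (ℓ - i) = ∑ i ∈ range ℓ, (i + 1) := by
    rw [← Finset.sum_range_reflect (fun i => ℓ - i) ℓ]
    refine Finset.sum_congr rfl fun i hi => ?_
    have := Finset.mem_range.1 hi
    omega
  have h4 : ∑ i ∈ range ℓ, (i + 1) = ∑ i ∈ range (ℓ+1), i := by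
    rw [Finset.sum_range_succ' (fun i => i) ℓ]; simp
  rw [h1, h2, h3, h4, Finset.sum_range_id]
  simp [Nat.mul_comm]


/-- MAP fails `(2−ε)`-AFS for every `ε > 0`: for `ℓ` with `(2−ε)(ℓ+3) < 2ℓ`, on the
profile above (with `n = ℓ + ℓ(ℓ+1)/2` voters) MAP assigns `p(x_i) = (ℓ+1−i)/n`
(zero-indexed `i`, i.e. `(ℓ+2−i)/n` for `i ∈ [ℓ]`) and `p(x*) = 0`, so the group `S` of
the `ℓ` voters approving `x*` has total utility `1 < (1/(2−ε))·|S|²/n`. -/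
theorem map_fails_two_sub_eps_afs (ε : ℝ) (hε : 0 < ε) (hε2 : ε < 2) (ℓ : ℕ)
    (hℓ : (2 - ε) * ((ℓ : ℝ) + 3) < 2 * ℓ) :
    Fintype.card (V12 ℓ) = ℓ + ℓ * (ℓ + 1) / 2 ∧
    (∀ i : Fin ℓ, mapShare (A12 ℓ) i.castSucc
        = ((ℓ : ℝ) + 1 - (i : ℕ)) / (Fintype.card (V12 ℓ))) ∧
    mapShare (A12 ℓ) (Fin.last ℓ) = 0 ∧
    (∑ i : Fin ℓ, ∑ x ∈ A12 ℓ (Sum.inl i), mapShare (A12 ℓ) x) = 1 ∧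
    1 < (1 / (2 - ε)) * ((ℓ : ℝ) ^ 2 / (Fintype.card (V12 ℓ))) := by
  have hε' : (0:ℝ) < 2 - ε := by linarith
  have hlpos : 0 < ℓ := by
    rcases Nat.eq_zero_or_pos ℓ with h | h
    · subst h; norm_num at hℓ; nlinarith
    · exact h
  have hl1 : (1:ℝ) ≤ (ℓ:ℝ) := by exact_mod_cast hlpos
  have h2dvd : 2 ∣ ℓ * (ℓ + 1) := (Nat.even_mul_succ_self ℓ).two_dvd
  have hnat : (ℓ + ℓ * (ℓ + 1) / 2) * 2 = ℓ * (ℓ + 3) := by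
    rw [Nat.add_mul, Nat.div_mul_cancel h2dvd]; ring
  have hc : (Fintype.card (V12 ℓ) : ℝ) * 2 = (ℓ:ℝ) * ((ℓ:ℝ) + 3) := by
    rw [card_V12]; exact_mod_cast hnat
  have hnpos : (0:ℝ) < (Fintype.card (V12 ℓ) : ℝ) := by nlinarith
  refine ⟨card_V12 ℓ, share_cast ℓ, share_last ℓ, ?_, ?_⟩
  · have hne : ∀ i : Fin ℓ, i.castSucc ≠ Fin.last ℓ :=
      fun i => (Fin.castSucc_lt_last i).ne
    have hstep : ∀ i : Fin ℓ, ∑ x ∈ A12 ℓ (Sum.inl i), mapShare (A12 ℓ) x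
        = ((ℓ:ℝ) + 1 - (i:ℕ)) / (Fintype.card (V12 ℓ)) := by
      intro i
      rw [show A12 ℓ (Sum.inl i) = {i.castSucc, Fin.last ℓ} from rfl,
        Finset.sum_pair (hne i), share_cast, share_last]
      ring
    rw [Finset.sum_congr rfl fun i _ => hstep i, ← Finset.sum_div]
    have hS : (∑ i ∈ range ℓ, (i:ℝ)) * 2 = (ℓ:ℝ) * ((ℓ:ℝ) - 1) := by
      have := Finset.sum_range_id_mul_two ℓ
      have hcast : ((∑ i ∈ range ℓ, i : ℕ) : ℝ) * 2 = ((ℓ * (ℓ - 1) : ℕ) : ℝ) := by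
        exact_mod_cast congrArg (Nat.cast : ℕ → ℝ) this
      rw [Nat.cast_sum] at hcast
      rw [hcast, Nat.cast_mul, Nat.cast_sub hlpos]
      push_cast; ring
    have hsum : ∑ i : Fin ℓ, ((ℓ:ℝ) + 1 - (i:ℕ)) = (Fintype.card (V12 ℓ) : ℝ) := by
      rw [Fin.sum_univ_eq_sum_range (fun i => (ℓ:ℝ) + 1 - (i:ℕ))]
      rw [Finset.sum_sub_distrib, Finset.sum_const, Finset.card_range,
        nsmul_eq_mul]
      nlinarith [hS, hc]
    rw [hsum, div_self (ne_of_gt hnpos)]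
  · have key : (2 - ε) * (Fintype.card (V12 ℓ) : ℝ) < (ℓ:ℝ)^2 := by nlinarith
    have heq : (1/(2-ε)) * ((ℓ:ℝ)^2/(Fintype.card (V12 ℓ))) =
        (ℓ:ℝ)^2 / ((2-ε) * (Fintype.card (V12 ℓ))) := by
      rw [div_mul_div_comm, one_mul]
    rw [heq, lt_div_iff₀ (by positivity)]
    linarith
end

section
/- In the MAP Ω(log n)-core construction, the deviation improves every voter's utility by a factor of at least k/2: the MAP distribution gives voter (i, j) utility 1/(k·2^{i−1}), while the uniform distribution q over X^k gives voter (i, j) utility 1/2^{i} if i < k and 1/2^{k−1} if i = k; hence u_{(i,j)}(q) ≥ (k/2)·u_{(i,j)}(p^k) for all voters (i,j). -/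
open Finset
open scoped Classical

lemma count_div_eq (N d c : ℕ) (hc : (c + 1) * 2 ^ d ≤ N) :
    ((Finset.univ : Finset (Fin N)).filter (fun (x : Fin N) => (x : ℕ) / 2 ^ d = c)).card
      = 2 ^ d := by
  have hd : 0 < 2 ^ d := Nat.pow_pos (by norm_num)
  have key : ((Finset.univ : Finset (Fin N)).filter
        (fun (x : Fin N) => (x : ℕ) / 2 ^ d = c)).card
      = (Finset.univ : Finset (Fin (2 ^ d))).card := by
    refine Finset.card_nbij' (fun (x : Fin N) => (⟨(x : ℕ) % 2 ^ d, Nat.mod_lt _ hd⟩ : Fin (2 ^ d)))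
      (fun (t : Fin (2 ^ d)) => (⟨c * 2 ^ d + (t : ℕ), by
        calc c * 2 ^ d + (t : ℕ) < c * 2 ^ d + 2 ^ d := by omega
          _ = (c + 1) * 2 ^ d := by ring
          _ ≤ N := hc⟩ : Fin N)) ?_ ?_ ?_ ?_
    · intro a ha; exact Finset.mem_univ _
    · intro t _
      simp only [Finset.mem_coe, Finset.mem_filter, Finset.mem_univ, true_and]
      have h2 : (c * 2 ^ d + (t : ℕ)) / 2 ^ d = c + (t : ℕ) / 2 ^ d := by
        rw [Nat.add_comm, Nat.add_mul_div_right _ _ hd, Nat.add_comm]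
      rw [h2, Nat.div_eq_of_lt t.isLt]
      omega
    · intro a ha
      simp only [Finset.mem_coe, Finset.mem_filter, Finset.mem_univ, true_and] at ha
      apply Fin.ext
      simp only
      have h3 := Nat.div_add_mod (a : ℕ) (2 ^ d)
      calc c * 2 ^ d + (a : ℕ) % 2 ^ d = 2 ^ d * ((a : ℕ) / 2 ^ d) + (a : ℕ) % 2 ^ d := by
            rw [ha]; ring
        _ = (a : ℕ) := h3
    · intro t _
      apply Fin.ext
      simp only
      rw [Nat.add_comm, Nat.add_mul_mod_self_right, Nat.mod_eq_of_lt t.isLt]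
  rw [key, Finset.card_univ, Fintype.card_fin]

/-- In the MAP Ω(log n)-core construction with parameter `k ≥ 2` (voters `(i,j)` with
`i : Fin k`, `j : Fin 2^(k−1)`, zero-indexed), the MAP distribution `p^k` — which assigns
`p^k(y_ℓ^i) = 1/(k·2^i)` and `p^k(x) = 0` for `x ∈ X^k` — gives voter `(i,j)` utility
`1/(k·2^i)`, while the uniform distribution `q` over `X^k` gives utility `1/2^(i+1)` if
`i < k−1` and `1/2^(k−1)` if `i = k−1`; hence `u_{(i,j)}(q) ≥ (k/2)·u_{(i,j)}(p^k)` for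
every voter. -/
theorem map_core_construction_deviation (k : ℕ) (hk : 2 ≤ k) :
    ∀ v : Fin k × Fin (2 ^ (k - 1)),
      -- ballots: one `y`-candidate per voter, and a block of `x`-candidates
      let A : Fin k × Fin (2 ^ (k - 1)) →
          Finset (Fin (2 ^ (k - 1)) ⊕ ((i : Fin k) × Fin (2 ^ (i : ℕ)))) := fun w =>
        Finset.univ.filter fun c =>
          match c with
          | Sum.inl x => (x : ℕ) / 2 ^ (k - 2 - (w.1 : ℕ)) = (w.2 : ℕ) / 2 ^ (k - 2 - (w.1 : ℕ))
          | Sum.inr y => (y.1 : ℕ) = (w.1 : ℕ) ∧ (y.2 : ℕ) = (w.2 : ℕ) / 2 ^ (k - 1 - (w.1 : ℕ))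
      let p : Fin (2 ^ (k - 1)) ⊕ ((i : Fin k) × Fin (2 ^ (i : ℕ))) → ℝ :=
        Sum.elim (fun _ => 0) (fun y => 1 / ((k : ℝ) * 2 ^ (y.1 : ℕ)))
      let q : Fin (2 ^ (k - 1)) ⊕ ((i : Fin k) × Fin (2 ^ (i : ℕ))) → ℝ :=
        Sum.elim (fun _ => 1 / (2 ^ (k - 1) : ℝ)) (fun _ => 0)
      (∑ c ∈ A v, p c = 1 / ((k : ℝ) * 2 ^ (v.1 : ℕ))) ∧
      (∑ c ∈ A v, q c
          = if (v.1 : ℕ) < k - 1 then 1 / (2 ^ ((v.1 : ℕ) + 1) : ℝ)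
            else 1 / (2 ^ (k - 1) : ℝ)) ∧
      ((k : ℝ) / 2) * (∑ c ∈ A v, p c) ≤ ∑ c ∈ A v, q c := by
  intro v A p q
  set i : ℕ := (v.1 : ℕ) with hi
  set j : ℕ := (v.2 : ℕ) with hj
  have hik : i < k := v.1.isLt
  have hjk : j < 2 ^ (k - 1) := v.2.isLt
  -- the unique y-candidate approved by v
  have hlt : j / 2 ^ (k - 1 - i) < 2 ^ i := by
    rw [Nat.div_lt_iff_lt_mul (Nat.pow_pos (by norm_num : 0 < 2) : 0 < 2 ^ (k - 1 - i))]
    calc j < 2 ^ (k - 1) := hjk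
      _ = 2 ^ i * 2 ^ (k - 1 - i) := by rw [← pow_add]; congr 1; omega
  set y₀ : (i' : Fin k) × Fin (2 ^ (i' : ℕ)) := ⟨v.1, ⟨j / 2 ^ (k - 1 - i), hlt⟩⟩ with hy₀
  -- part 1
  have hp : ∑ c ∈ A v, p c = 1 / ((k : ℝ) * 2 ^ i) := by
    have hmem : Sum.inr y₀ ∈ A v := by
      simp only [A, Finset.mem_filter, Finset.mem_univ, true_and]
      exact ⟨rfl, rfl⟩
    have hz : ∀ b ∈ A v, b ≠ Sum.inr y₀ → p b = 0 := by
      intro b hb hne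
      rcases b with x | y
      · simp [p]
      · exfalso
        apply hne
        obtain ⟨a, b⟩ := y
        simp only [A, Finset.mem_filter, Finset.mem_univ, true_and] at hb
        obtain ⟨h1, h2⟩ := hb
        have ha : a = v.1 := Fin.ext h1
        subst ha
        have hb2 : b = (⟨j / 2 ^ (k - 1 - i), hlt⟩ : Fin (2 ^ ((v.1 : Fin k) : ℕ))) :=
          Fin.ext h2
        rw [hy₀, hb2]
    rw [Finset.sum_eq_single_of_mem (Sum.inr y₀) hmem hz]
    rfl
  -- part 2
  have hcnum : (j / 2 ^ (k - 2 - i) + 1) * 2 ^ (k - 2 - i) ≤ 2 ^ (k - 1) := by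
    have hlt2 : j / 2 ^ (k - 2 - i) < 2 ^ (k - 1 - (k - 2 - i)) := by
      rw [Nat.div_lt_iff_lt_mul (Nat.pow_pos (by norm_num : 0 < 2) : 0 < 2 ^ (k - 2 - i))]
      calc j < 2 ^ (k - 1) := hjk
        _ = 2 ^ (k - 1 - (k - 2 - i)) * 2 ^ (k - 2 - i) := by
            rw [← pow_add]; congr 1; omega
    calc (j / 2 ^ (k - 2 - i) + 1) * 2 ^ (k - 2 - i)
        ≤ 2 ^ (k - 1 - (k - 2 - i)) * 2 ^ (k - 2 - i) := by
          exact Nat.mul_le_mul_right _ hlt2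
      _ = 2 ^ (k - 1) := by rw [← pow_add]; congr 1; omega
  have hq : ∑ c ∈ A v, q c = (2 ^ (k - 2 - i) : ℝ) * (1 / (2 ^ (k - 1) : ℝ)) := by
    rw [Finset.sum_filter, Fintype.sum_sum_type]
    simp only [q, Sum.elim_inl, Sum.elim_inr, ite_self, Finset.sum_const_zero, add_zero]
    rw [show (2 ^ (k - 2 - i) : ℝ) * (1 / (2 ^ (k - 1) : ℝ)) = ∑ a : Fin (2 ^ (k - 1)),
        if (a : ℕ) / 2 ^ (k - 2 - i) = j / 2 ^ (k - 2 - i) then (1 / (2 ^ (k - 1) : ℝ)) else 0 by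
      rw [← Finset.sum_filter, Finset.sum_const, count_div_eq _ _ _ hcnum, nsmul_eq_mul]
      push_cast
      ring]
    exact Finset.sum_congr rfl (fun a _ => by congr)
  refine ⟨hp, ?_, ?_⟩
  · rw [hq]
    by_cases hcase : i < k - 1
    · rw [if_pos hcase]
      have hpow : (2 : ℝ) ^ (k - 1) = 2 ^ (k - 2 - i) * 2 ^ (i + 1) := by
        rw [← pow_add]; congr 1; omega
      rw [hpow]
      have h1 : (2 : ℝ) ^ (k - 2 - i) ≠ 0 := by positivity
      have h2 : (2 : ℝ) ^ (i + 1) ≠ 0 := by positivity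
      field_simp
    · rw [if_neg hcase]
      have : k - 2 - i = 0 := by omega
      rw [this]
      norm_num
  · rw [hp, hq]
    have hkpos : (0 : ℝ) < (k : ℝ) := by
      exact_mod_cast Nat.lt_of_lt_of_le (by norm_num) hk
    have hL : (k : ℝ) / 2 * (1 / ((k : ℝ) * 2 ^ i)) = 1 / 2 ^ (i + 1) := by
      field_simp
      ring
    rw [hL]
    have hexp : (i + 1) + (k - 2 - i) ≥ k - 1 := by omega
    calc (1 : ℝ) / 2 ^ (i + 1)
        = 2 ^ (k - 2 - i) * (1 / 2 ^ ((i + 1) + (k - 2 - i))) := by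
          rw [pow_add]; field_simp; rw [pow_add, pow_succ]
      _ ≤ 2 ^ (k - 2 - i) * (1 / 2 ^ (k - 1)) := by
          apply mul_le_mul_of_nonneg_left _ (by positivity)
          apply one_div_le_one_div_of_le (by positivity)
          exact pow_le_pow_right₀ (by norm_num) hexp
end

section
/- For a payment willingness function π and α ∈ ℝ such that all the AFS-necessary inequalities hold with equality-attaining coefficients, one derives the lower bound α ≥ (3/2)(1 − 3^{−t}): if real numbers π₁ ≥ π₂ ≥ … ≥ π_t ≥ 0 with ∑_{i=1}^t π_i = 1 satisfy π₁ ≥ 1/α and (1/2)π₁ + π₂ + … + π_{z} + (3/2)π_{z+1} ≥ 1/α for all z ∈ [t−1], then α ≥ (3/2)(1 − 3^{−t}). -/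
open Finset

/-- Lower bound for sequential payment rules: if reals `π₁ ≥ π₂ ≥ … ≥ π_t ≥ 0` sum to `1`
and satisfy `π₁ ≥ 1/α` as well as
`(1/2)π₁ + π₂ + … + π_z + (3/2)π_{z+1} ≥ 1/α` for all `z ∈ [t−1]`,
then `α ≥ (3/2)(1 − 3^{−t})`. -/
theorem spr_afs_lower_bound (t : ℕ) (ht : 1 ≤ t) (α : ℝ) (hα : 0 < α)
    (π : ℕ → ℝ)
    (hnn : ∀ i ∈ Finset.Icc 1 t, 0 ≤ π i)
    (hmono : ∀ i, 1 ≤ i → i < t → π (i + 1) ≤ π i)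
    (hsum : ∑ i ∈ Finset.Icc 1 t, π i = 1)
    (h1 : 1 / α ≤ π 1)
    (hz : ∀ z, 1 ≤ z → z + 1 ≤ t →
      1 / α ≤ (1 / 2) * π 1 + (∑ j ∈ Finset.Icc 2 z, π j) + (3 / 2) * π (z + 1)) :
    (3 / 2) * (1 - (1 / 3 : ℝ) ^ t) ≤ α := by
  -- Key weighted-sum inequality, proved by induction.
  have N : ∀ k : ℕ, k + 1 ≤ t →
      ((3:ℝ)^k - 1) * (1/α) ≤ (((3:ℝ)^k - 1)/2) * π 1 + (3:ℝ)^k * ∑ j ∈ Finset.Icc 2 (k+1), π j := by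
    intro k
    induction k with
    | zero => intro _; simp
    | succ k ih =>
      intro hk1
      have ihk := ih (by omega)
      have hzk := hz (k+1) (by omega) (by omega)
      have hsplit : ∑ j ∈ Finset.Icc 2 (k+1+1), π j
          = (∑ j ∈ Finset.Icc 2 (k+1), π j) + π (k+2) := by
        rw [Finset.sum_Icc_succ_top (by omega : 2 ≤ k + 1 + 1)]
      have hp : (0:ℝ) < (3:ℝ)^k := by positivity
      have hmul := mul_le_mul_of_nonneg_left hzk (by positivity : (0:ℝ) ≤ 2 * (3:ℝ)^k)
      rw [hsplit, pow_succ]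
      nlinarith [hmul, ihk]
  -- Instantiate at k = t - 1.
  obtain ⟨s, rfl⟩ : ∃ s, t = s + 1 := ⟨t - 1, by omega⟩
  have hN := N s le_rfl
  set p : ℝ := (3:ℝ)^s with hpdef
  have hp : (0:ℝ) < p := by positivity
  -- split the total sum
  have hins : Finset.Icc 1 (s+1) = insert 1 (Finset.Icc 2 (s+1)) := by
    ext x; simp [Finset.mem_Icc, Finset.mem_insert]; omega
  have h1notin : (1:ℕ) ∉ Finset.Icc 2 (s+1) := by simp
  have hsum' : π 1 + ∑ j ∈ Finset.Icc 2 (s+1), π j = 1 := by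
    rw [hins, Finset.sum_insert h1notin] at hsum
    exact hsum
  -- combine with h1:
  have key : (3*p - 1)/2 * (1/α) ≤ p := by nlinarith [hN, h1, hp]
  have key2 : (3*p - 1)/2 ≤ p * α := by
    have heq : (3*p - 1)/2 = ((3*p - 1)/2 * (1/α)) * α := by field_simp
    rw [heq]
    exact mul_le_mul_of_nonneg_right key (le_of_lt hα)
  have hpow : ((1:ℝ)/3)^(s+1) = 1/(p*3) := by
    rw [one_div, inv_pow, pow_succ, hpdef, one_div]
  rw [hpow, show (3:ℝ)/2*(1-1/(p*3)) = (3*p-1)/(2*p) by field_simp,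
    div_le_iff₀ (by positivity : (0:ℝ) < 2*p)]
  nlinarith [key2]
end

section
/- Uniqueness of the 1/3-multiplicative payment willingness: if π₁ ≥ π₂ ≥ … ≥ π_t ≥ 0 sum to 1 and satisfy π₁ ≥ 1/α and (1/2)π₁ + π₂ + … + π_z + (3/2)π_{z+1} ≥ 1/α for all z ∈ [t−1], where α = (3/2)(1 − 3^{−t}), then π_i = 3^{−i}/(∑_{j=1}^t 3^{−j}) for all i ∈ [t]. -/
open Finset

/-- Uniqueness of the 1/3-multiplicative payment willingness: if `π₁ ≥ … ≥ π_t ≥ 0`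
sum to `1` and satisfy the AFS-necessary inequalities with `α = (3/2)(1 − 3^{−t})`,
then `π_i = 3^{−i} / ∑_{j=1}^t 3^{−j}` for all `i ∈ [t]`. -/
theorem one_third_msp_unique (t : ℕ) (ht : 2 ≤ t)
    (π : ℕ → ℝ)
    (hnn : ∀ i ∈ Finset.Icc 1 t, 0 ≤ π i)
    (hmono : ∀ i, 1 ≤ i → i < t → π (i + 1) ≤ π i)
    (hsum : ∑ i ∈ Finset.Icc 1 t, π i = 1)
    (h1 : 1 / ((3 / 2) * (1 - (1 / 3 : ℝ) ^ t)) ≤ π 1)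
    (hz : ∀ z, 1 ≤ z → z + 1 ≤ t →
      1 / ((3 / 2) * (1 - (1 / 3 : ℝ) ^ t)) ≤
        (1 / 2) * π 1 + (∑ j ∈ Finset.Icc 2 z, π j) + (3 / 2) * π (z + 1)) :
    ∀ i ∈ Finset.Icc 1 t, π i = (1 / 3 : ℝ) ^ i / ∑ j ∈ Finset.Icc 1 t, (1 / 3 : ℝ) ^ j := by
  have hx1 : (1/3:ℝ)^t < 1 := pow_lt_one₀ (by norm_num) (by norm_num) (by omega)
  have hxpos : (0:ℝ) < (1/3:ℝ)^t := by positivity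
  have hne : (1/3:ℝ) ≠ 1 := by norm_num
  have hgeo : ∀ a b : ℕ, a ≤ b + 1 →
      ∑ i ∈ Finset.Icc a b, (1/3:ℝ)^i = ((1/3:ℝ)^a - (1/3:ℝ)^(b+1)) / (2/3) := by
    intro a b hab
    rw [← Finset.Ico_add_one_right_eq_Icc, geom_sum_Ico' hne hab]
    norm_num
  have hSval : ∑ j ∈ Finset.Icc 1 t, (1/3:ℝ)^j = (1 - (1/3:ℝ)^t) / 2 := by
    rw [hgeo 1 t (by omega), pow_succ]
    ring
  set S : ℝ := ∑ j ∈ Finset.Icc 1 t, (1/3:ℝ)^j with hS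
  have hSpos : 0 < S := by rw [hSval]; linarith
  set c : ℝ := 1 / ((3 / 2) * (1 - (1 / 3 : ℝ) ^ t)) with hc
  have hc1 : c = (1/3:ℝ)^1 / S := by
    rw [hc, hSval]
    field_simp
  -- splitting lemma for sums
  have hsplit : ∀ j, 2 ≤ j → j ≤ t → ∀ f : ℕ → ℝ,
      ∑ i ∈ Finset.Icc 1 t, f i =
        f 1 + ∑ i ∈ Finset.Icc 2 (j-1), f i + f j + ∑ i ∈ Finset.Icc (j+1) t, f i := by
    intro j hj2 hjt f
    have e1 : Finset.Icc 1 t = Finset.Ico 1 (t+1) := (Finset.Ico_add_one_right_eq_Icc 1 t).symm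
    have e2 : Finset.Icc 2 (j-1) = Finset.Ico 2 j := by
      rw [← Finset.Ico_add_one_right_eq_Icc]; congr 1; omega
    have e3 : Finset.Icc (j+1) t = Finset.Ico (j+1) (t+1) := (Finset.Ico_add_one_right_eq_Icc _ t).symm
    rw [e1, e2, e3]
    rw [← Finset.sum_Ico_consecutive f (show 1 ≤ j+1 by omega) (show j+1 ≤ t+1 by omega)]
    rw [← Finset.sum_Ico_consecutive f (show 1 ≤ j by omega) (show j ≤ j+1 by omega)]
    rw [← Finset.sum_Ico_consecutive f (show 1 ≤ 2 by omega) (show 2 ≤ j by omega)]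
    rw [Nat.Ico_succ_singleton, show (2:ℕ) = 1 + 1 from rfl, Nat.Ico_succ_singleton]
    simp
  -- the key one-step bound
  have hstep : ∀ j, 2 ≤ j → j ≤ t →
      (∑ i ∈ Finset.Icc (j+1) t, (1/3:ℝ)^i / S ≤ ∑ i ∈ Finset.Icc (j+1) t, π i) →
      (1/3:ℝ)^j / S ≤ π j := by
    intro j hj2 hjt htail
    have hzz := hz (j-1) (by omega) (by omega)
    rw [show j - 1 + 1 = j from by omega] at hzz
    have hsp := hsplit j hj2 hjt π
    rw [hsum] at hsp
    have hTq : ∑ i ∈ Finset.Icc (j+1) t, (1/3:ℝ)^i / S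
        = ((1/3:ℝ)^j - (1/3:ℝ)^t) / 2 / S := by
      rw [← Finset.sum_div, hgeo (j+1) t (by omega), pow_succ, pow_succ]
      ring_nf
    have h0 : (1:ℝ) - (1/3)^t ≠ 0 := by linarith
    have hid2 : 3 * c - 2 = (1/3:ℝ)^t / S := by
      rw [hc, hSval]
      generalize (1/3:ℝ)^t = y at h0 ⊢
      field_simp
      ring
    have hid : (1/3:ℝ)^j / S = 3 * c - 2 + 2 * (((1/3:ℝ)^j - (1/3:ℝ)^t) / 2 / S) := by
      linear_combination -hid2
    rw [hid]
    rw [hTq] at htail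
    linarith [hzz, h1, htail, hsp]
  -- downward induction
  have key : ∀ k, ∀ j, 1 ≤ j → j ≤ t → t ≤ j + k → (1/3:ℝ)^j / S ≤ π j := by
    intro k
    induction k with
    | zero =>
      intro j h1j hjt hk
      have hjt' : j = t := by omega
      subst hjt'
      apply hstep j (by omega) le_rfl
      rw [Finset.Icc_eq_empty (by omega)]
      simp
    | succ k ih =>
      intro j h1j hjt hk
      by_cases h : t ≤ j + k
      · exact ih j h1j hjt h
      · rcases eq_or_lt_of_le h1j with h1 | hj2
        · rw [← h1, ← hc1]; exact h1 ▸ ‹1 / ((3 / 2) * (1 - (1 / 3 : ℝ) ^ t)) ≤ π 1›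
        · apply hstep j (by omega) hjt
          apply Finset.sum_le_sum
          intro i hi
          rw [Finset.mem_Icc] at hi
          exact ih i (by omega) hi.2 (by omega)
  have hlb : ∀ i ∈ Finset.Icc 1 t, (1/3:ℝ)^i / S ≤ π i := by
    intro i hi
    rw [Finset.mem_Icc] at hi
    exact key t i hi.1 hi.2 (by omega)
  have hqsum : ∑ i ∈ Finset.Icc 1 t, (1/3:ℝ)^i / S = 1 := by
    rw [← Finset.sum_div, ← hS, div_self hSpos.ne']
  have heq := (Finset.sum_eq_sum_iff_of_le hlb).mp (by rw [hqsum, hsum])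
  intro i hi
  exact (heq i hi).symm
end
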